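/- arXiv:math/0607467 — 4 statements merged into one kernel-verified Lean document; each statement's English description precedes it below -/
import Mathlib

section
/- Let Γ be a countable group and μ a probability measure on Γ whose support generates Γ, such that the associated random walk is transient. If the entropy H(μ) = −Σ_{x∈Γ} μ(x) ln μ(x) is finite, then the first moment of μ in the Green metric is finite; more precisely, Σ_{x∈Γ} μ(x) · d_G(e, x) ≤ H(μ) < ∞. -/
open MeasureTheory ProbabilityTheory Filter
open scoped ENNReal

noncomputable section

variable {Γ Ω : Type*}

/-- Position at time `n` of the random walk started at `x` with i.i.d. increments
`X 0, X 1, …` : `Z_n = x * X_0 * X_1 * ⋯ * X_{n-1}` (ordered product). -/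
def walk [Group Γ] (x : Γ) (X : ℕ → Ω → Γ) (n : ℕ) (ω : Ω) : Γ :=
  x * ((List.range n).map fun k => X k ω).prod

/-- Hitting probability `F(x,y) = ℙ^x[∃ n ≥ 0, Z_n = y]`. -/
def hitProb [Group Γ] [MeasurableSpace Ω] (P : Measure Ω) (X : ℕ → Ω → Γ) (x y : Γ) : ℝ≥0∞ :=
  P {ω | ∃ n : ℕ, walk x X n ω = y}

/-- Green metric `d_G(x,y) = -ln F(x,y)`. -/
def greenDist [Group Γ] [MeasurableSpace Ω] (P : Measure Ω) (X : ℕ → Ω → Γ) (x y : Γ) : ℝ :=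
  - Real.log (hitProb P X x y).toReal

/-- Green function `G(x,y) = Σ_{n≥0} ℙ^x[Z_n = y]`. -/
def greenFn [Group Γ] [MeasurableSpace Ω] (P : Measure Ω) (X : ℕ → Ω → Γ) (x y : Γ) : ℝ≥0∞ :=
  ∑' n : ℕ, P {ω | walk x X n ω = y}

/-- Martin kernel `K(x,y) = G(x,y)/G(e,y)` (real-valued; `G` is finite by transience). -/
def martinK [Group Γ] [MeasurableSpace Ω] (P : Measure Ω) (X : ℕ → Ω → Γ) (x y : Γ) : ℝ :=
  (greenFn P X x y).toReal / (greenFn P X 1 y).toReal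

/-- Word ball of radius `n` for the generating set `S` : elements expressible as a
product of at most `n` generators. -/
def wordBall [Group Γ] (S : Finset Γ) (n : ℕ) : Set Γ :=
  {x | ∃ l : List Γ, l.length ≤ n ∧ (∀ g ∈ l, g ∈ (S : Set Γ)) ∧ l.prod = x}

/-!
The walk started at `e` is at `g` at time `1` with probability `μ(g)`, so `F(e, g) ≥ μ(g)` and
hence `μ(g) d_G(e, g) = -μ(g) ln F(e, g) ≤ -μ(g) ln μ(g)`. Summing over `g` gives the bound.
-/

theorem Real.mul_neg_log_le_negMulLog {p q : ℝ} (hp : 0 ≤ p) (hpq : p ≤ q) :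
    p * -Real.log q ≤ Real.negMulLog p := by
  rcases hp.eq_or_lt with rfl | hp
  · simp
  · rw [Real.negMulLog, neg_mul, ← mul_neg]
    exact mul_le_mul_of_nonneg_left (neg_le_neg (Real.log_le_log hp hpq)) hp.le

theorem walk_one [Group Γ] (X : ℕ → Ω → Γ) (x : Γ) (ω : Ω) : walk x X 1 ω = x * X 0 ω := by
  simp [walk]

section RandomWalk

variable [Group Γ] [MeasurableSpace Ω] (P : Measure Ω) (X : ℕ → Ω → Γ)

theorem hitProb_le_one [IsProbabilityMeasure P] (x y : Γ) : hitProb P X x y ≤ 1 :=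
  prob_le_one

theorem greenDist_nonneg [IsProbabilityMeasure P] (x y : Γ) : 0 ≤ greenDist P X x y :=
  neg_nonneg.2 <| Real.log_nonpos ENNReal.toReal_nonneg <|
    ENNReal.toReal_le_of_le_ofReal zero_le_one (by simpa using hitProb_le_one P X x y)

theorem map_singleton_le_hitProb [MeasurableSpace Γ] [MeasurableSingletonClass Γ]
    (hX : Measurable (X 0)) (x g : Γ) : P.map (X 0) {g} ≤ hitProb P X x (x * g) := by
  rw [Measure.map_apply hX (measurableSet_singleton g)]
  exact measure_mono fun ω (hω : X 0 ω = g) => ⟨1, by rw [walk_one, hω]⟩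

end RandomWalk

theorem greenDist_first_moment_le_entropy_general
    [Group Γ] [MeasurableSpace Γ] [MeasurableSingletonClass Γ]
    [MeasurableSpace Ω] (P : Measure Ω) [IsProbabilityMeasure P]
    (μ : Measure Γ)
    (X : ℕ → Ω → Γ) (hmeas : ∀ k, Measurable (X k))
    (hlaw : ∀ k, Measure.map (X k) P = μ)
    (hent : Summable fun g : Γ => Real.negMulLog (μ {g}).toReal) :
    Summable (fun g : Γ => (μ {g}).toReal * greenDist P X 1 g) ∧
      ∑' g : Γ, (μ {g}).toReal * greenDist P X 1 g
        ≤ ∑' g : Γ, Real.negMulLog (μ {g}).toReal := by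
  have hμ_le_hitProb (g : Γ) : (μ {g}).toReal ≤ (hitProb P X 1 g).toReal := by
    refine ENNReal.toReal_mono (ne_top_of_le_ne_top ENNReal.one_ne_top (hitProb_le_one P X 1 g)) ?_
    simpa [hlaw 0] using map_singleton_le_hitProb P X (hmeas 0) 1 g
  have hle (g : Γ) : (μ {g}).toReal * greenDist P X 1 g ≤ Real.negMulLog (μ {g}).toReal :=
    Real.mul_neg_log_le_negMulLog ENNReal.toReal_nonneg (hμ_le_hitProb g)
  have hnonneg (g : Γ) : 0 ≤ (μ {g}).toReal * greenDist P X 1 g :=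
    mul_nonneg ENNReal.toReal_nonneg (greenDist_nonneg P X 1 g)
  have hsum := Summable.of_nonneg_of_le hnonneg hle hent
  exact ⟨hsum, hsum.tsum_le_tsum hle hent⟩

/-- Finite entropy implies finite first moment in the Green metric;
more precisely `Σ_x μ(x) d_G(e,x) ≤ H(μ) < ∞`. -/
theorem greenDist_first_moment_le_entropy
    [Group Γ] [Countable Γ] [MeasurableSpace Γ] [MeasurableSingletonClass Γ]
    [MeasurableSpace Ω] (P : Measure Ω) [IsProbabilityMeasure P]
    (μ : Measure Γ) [IsProbabilityMeasure μ]
    (X : ℕ → Ω → Γ) (hmeas : ∀ k, Measurable (X k))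
    (hiid : iIndepFun X P)
    (hlaw : ∀ k, Measure.map (X k) P = μ)
    (hgen : Subgroup.closure {g : Γ | μ {g} ≠ 0} = ⊤)
    (htrans : P {ω | ∃ n ≥ 1, walk 1 X n ω = 1} < 1)
    (hent : Summable fun g : Γ => Real.negMulLog (μ {g}).toReal) :
    Summable (fun g : Γ => (μ {g}).toReal * greenDist P X 1 g) ∧
      ∑' g : Γ, (μ {g}).toReal * greenDist P X 1 g
        ≤ ∑' g : Γ, Real.negMulLog (μ {g}).toReal :=
  greenDist_first_moment_le_entropy_general P μ X hmeas hlaw hent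
end
end

section
/- Let Γ be a countable group and μ a probability measure on Γ whose support generates Γ, with finite entropy H(μ), such that the associated random walk is transient. Then the Green speed is bounded above by the asymptotic entropy: ℓ_G ≤ h. -/
open MeasureTheory ProbabilityTheory Filter
open scoped ENNReal

noncomputable section

variable {Γ Ω : Type*}

/-! The event `Z_n = y` is contained in the event that the walk ever visits `y`, so
`μⁿ(y) ≤ F(e, y)`, i.e. `d_G(e, y) ≤ -ln μⁿ(y)` wherever `μⁿ(y) > 0`. Evaluating at `y = Z_n`,
which almost surely has positive `μⁿ`-mass, dividing by `n` and passing to the limit gives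
`ℓ_G ≤ h`. -/

section Walk

variable [Group Γ]

lemma walk_succ (x : Γ) (X : ℕ → Ω → Γ) (n : ℕ) (ω : Ω) :
    walk x X (n + 1) ω = walk x X n ω * X n ω := by
  simp [walk, List.range_succ, mul_assoc]

lemma measurable_walk [MeasurableSpace Γ] [MeasurableMul₂ Γ] [MeasurableSpace Ω]
    (x : Γ) {X : ℕ → Ω → Γ} (hX : ∀ k, Measurable (X k)) (n : ℕ) :
    Measurable (walk x X n) := by
  induction n with
  | zero =>
    have h0 : walk x X 0 = fun _ => x := funext fun ω => by simp [walk]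
    exact h0 ▸ measurable_const
  | succ n ih =>
    have hsucc : walk x X (n + 1) = fun ω => walk x X n ω * X n ω := funext (walk_succ x X n)
    exact hsucc ▸ ih.mul (hX n)

end Walk

section HitProb

variable [Group Γ] [MeasurableSpace Γ] [MeasurableSpace Ω] {P : Measure Ω} {X : ℕ → Ω → Γ} {n : ℕ}

lemma map_walk_singleton_le_hitProb [MeasurableSingletonClass Γ]
    {x : Γ} (hmeas : Measurable (walk x X n)) (y : Γ) :
    P.map (walk x X n) {y} ≤ hitProb P X x y := by
  rw [Measure.map_apply hmeas (measurableSet_singleton y)]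
  exact measure_mono fun ω hω => ⟨n, hω⟩

lemma greenDist_le_neg_log_map_walk [MeasurableSingletonClass Γ] [IsFiniteMeasure P]
    {x y : Γ} (hmeas : Measurable (walk x X n)) (hy : P.map (walk x X n) {y} ≠ 0) :
    greenDist P X x y ≤ -Real.log (P.map (walk x X n) {y}).toReal :=
  neg_le_neg <| Real.log_le_log (ENNReal.toReal_pos hy (measure_ne_top _ _)) <|
    ENNReal.toReal_mono (measure_ne_top P _) (map_walk_singleton_le_hitProb hmeas y)

end HitProb

lemma ae_map_singleton_ne_zero {α : Type*} [MeasurableSpace α] [Countable α]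
    [MeasurableSpace Ω] {P : Measure Ω} {f : Ω → α} (hf : AEMeasurable f P) :
    ∀ᵐ ω ∂P, P.map f {f ω} ≠ 0 :=
  ae_of_ae_map hf (ae_iff_of_countable.2 fun _ h => h)

theorem green_speed_le_asymptotic_entropy_general
    [Group Γ] [Countable Γ] [MeasurableSpace Γ] [MeasurableSingletonClass Γ]
    [MeasurableSpace Ω] (P : Measure Ω) [IsProbabilityMeasure P]
    (X : ℕ → Ω → Γ) (hmeas : ∀ k, Measurable (X k)) :
    ∀ lG h : ℝ,
      (∀ᵐ ω ∂P, Tendsto (fun n : ℕ => greenDist P X 1 (walk 1 X n ω) / n)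
        atTop (nhds lG)) →
      (∀ᵐ ω ∂P, Tendsto (fun n : ℕ =>
          (- Real.log ((Measure.map (walk 1 X n) P) {walk 1 X n ω}).toReal) / n)
        atTop (nhds h)) →
      lG ≤ h := by
  intro lG h hGreen hEntropy
  have hwalk := measurable_walk 1 hmeas
  have hpos : ∀ᵐ ω ∂P, ∀ n, P.map (walk 1 X n) {walk 1 X n ω} ≠ 0 :=
    ae_all_iff.2 fun n => ae_map_singleton_ne_zero (hwalk n).aemeasurable
  obtain ⟨ω, ⟨hωGreen, hωEntropy⟩, hωpos⟩ := ((hGreen.and hEntropy).and hpos).exists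
  exact le_of_tendsto_of_tendsto' hωGreen hωEntropy fun n =>
    div_le_div_of_nonneg_right (greenDist_le_neg_log_map_walk (hwalk n) (hωpos n)) n.cast_nonneg

/-- The Green speed is bounded above by the asymptotic entropy:
`ℓ_G ≤ h`. -/
theorem green_speed_le_asymptotic_entropy
    [Group Γ] [Countable Γ] [MeasurableSpace Γ] [MeasurableSingletonClass Γ]
    [MeasurableSpace Ω] (P : Measure Ω) [IsProbabilityMeasure P]
    (μ : Measure Γ) [IsProbabilityMeasure μ]
    (X : ℕ → Ω → Γ) (hmeas : ∀ k, Measurable (X k))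
    (hiid : iIndepFun X P)
    (hlaw : ∀ k, Measure.map (X k) P = μ)
    (hgen : Subgroup.closure {g : Γ | μ {g} ≠ 0} = ⊤)
    (hent : Summable fun g : Γ => Real.negMulLog (μ {g}).toReal)
    (htrans : P {ω | ∃ n ≥ 1, walk 1 X n ω = 1} < 1) :
    ∀ lG h : ℝ,
      (∀ᵐ ω ∂P, Tendsto (fun n : ℕ => greenDist P X 1 (walk 1 X n ω) / n)
        atTop (nhds lG)) →
      (∀ᵐ ω ∂P, Tendsto (fun n : ℕ =>
          (- Real.log ((Measure.map (walk 1 X n) P) {walk 1 X n ω}).toReal) / n)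
        atTop (nhds h)) →
      lG ≤ h :=
  green_speed_le_asymptotic_entropy_general P X hmeas
end
end

section
/- Let Γ be a countable group and μ a probability measure on Γ whose support generates Γ, such that the associated random walk is transient. Let X̃₁ be a random variable with law μ̃ (where μ̃(x) = μ(x⁻¹)), independent of the random walk (Z_n) started at e. Then for every a > 0, ℙ ⊗ ℙ̃[ sup_{n≥0} K(X̃₁, Z_n) ≥ a ] ≤ 1/a, where K(x, y) = G(x, y)/G(e, y) is the Martin kernel. -/
/-!
Fix a value `x` of `X̃₁` and put `R_x = {z | a G(e,z) ≤ G(x,z)}`, which contains every `z` with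
`K(x,z) ≥ a`. For a finite set `S`, the last-exit decomposition writes the probability that the
walk started at `t` hits `S` and visits it for a last time as `∑_{z ∈ S} G(t,z) e_S(z)`, where
`e_S(z)` is the probability that the walk from `z` never comes back to `S`. This is at most one
for every `t`; with `S = {z}` it gives `G(t,z) (1 - ℙ[return to e]) ≤ 1`, so transience makes `G`
finite, the walk visits `S` only finitely often almost surely (Borel–Cantelli), and the sum equals
`ℙ^t[hit S]`. Hence, for finite `S ⊆ R_x`,
`a ℙ^e[hit S] = ∑ a G(e,z) e_S(z) ≤ ∑ G(x,z) e_S(z) ≤ 1`, so `ℙ^e[hit R_x] ≤ 1/a`, and averaging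
over the value of `X̃₁`, which is independent of the walk, gives the inequality.
-/

open MeasureTheory ProbabilityTheory Filter
open scoped ENNReal

noncomputable section

variable {Γ Ω : Type*}

lemma Nat.exists_max_of_eventually_not {p : ℕ → Prop} (h : ∃ n, p n)
    (hev : ∀ᶠ n in atTop, ¬ p n) : ∃ n, p n ∧ ∀ m > n, ¬ p m := by
  classical
  obtain ⟨N, hN⟩ := eventually_atTop.1 hev
  obtain ⟨n, hn⟩ := h
  have hnN : n ≤ N := le_of_not_ge fun h => hN n h hn
  refine ⟨Nat.findGreatest p N, Nat.findGreatest_spec hnN hn, fun m hm hpm => ?_⟩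
  rcases le_or_gt m N with hmN | hmN
  · exact Nat.findGreatest_is_greatest hm hmN hpm
  · exact hN m hmN.le hpm

lemma ENNReal.ofReal_mul_le_of_le_toReal_div {a : ℝ} {u v : ℝ≥0∞} (ha : 0 < a)
    (h : a ≤ u.toReal / v.toReal) : ENNReal.ofReal a * v ≤ u := by
  have hv : 0 < v.toReal := by
    by_contra! hv
    have hzero : u.toReal / v.toReal = 0 := by simp [le_antisymm hv ENNReal.toReal_nonneg]
    linarith
  calc ENNReal.ofReal a * v = ENNReal.ofReal (a * v.toReal) := by
        rw [ENNReal.ofReal_mul ha.le, ENNReal.ofReal_toReal (ENNReal.toReal_pos_iff.1 hv).2.ne]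
    _ ≤ ENNReal.ofReal u.toReal := ENNReal.ofReal_le_ofReal ((le_div_iff₀ hv).1 h)
    _ ≤ u := ENNReal.ofReal_toReal_le

lemma ProbabilityTheory.IndepFun.measure_setOf_mem_le {α β : Type*} [MeasurableSpace α]
    [MeasurableSpace β] [Countable β] [MeasurableSingletonClass β] [MeasurableSpace Ω]
    {P : Measure Ω} [IsZeroOrProbabilityMeasure P] {Y : Ω → β} {V : Ω → α} (hind : IndepFun Y V P)
    (hY : Measurable Y) {B : β → Set α} (hB : ∀ y, MeasurableSet (B y)) {c : ℝ≥0∞}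
    (hc : ∀ y, P (V ⁻¹' B y) ≤ c) : P {ω | V ω ∈ B (Y ω)} ≤ c := by
  have hset : {ω | V ω ∈ B (Y ω)} = ⋃ y, Y ⁻¹' {y} ∩ V ⁻¹' B y := by
    ext ω; simp
  calc P {ω | V ω ∈ B (Y ω)} ≤ ∑' y, P (Y ⁻¹' {y} ∩ V ⁻¹' B y) := hset ▸ measure_iUnion_le _
    _ = ∑' y, P (Y ⁻¹' {y}) * P (V ⁻¹' B y) :=
        tsum_congr fun y =>
          hind.measure_inter_preimage_eq_mul _ _ (measurableSet_singleton y) (hB y)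
    _ ≤ ∑' y, P (Y ⁻¹' {y}) * c := ENNReal.tsum_le_tsum fun y => by gcongr; exact hc y
    _ = P (Y ⁻¹' Set.univ) * c := by
        rw [ENNReal.tsum_mul_right, ← tsum_measure_preimage_singleton Set.countable_univ
          fun y _ => hY (measurableSet_singleton y), tsum_univ fun y => P (Y ⁻¹' {y})]
    _ ≤ c := mul_le_of_le_one_left' prob_le_one

lemma ProbabilityTheory.iIndepFun.measure_inter_preimage_shift {β : Type*} [MeasurableSpace β]
    [MeasurableSpace Ω] {P : Measure Ω} {μ : Measure β} {X : ℕ → Ω → β} (hiid : iIndepFun X P)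
    (hmeas : ∀ k, Measurable (X k)) (hlaw : ∀ k, P.map (X k) = μ) {n : ℕ} {A : Set Ω}
    (hA : MeasurableSet[⨆ i ∈ Set.Iio n, MeasurableSpace.comap (X i) inferInstance] A)
    {B : Set (ℕ → β)} (hB : MeasurableSet B) :
    P (A ∩ (fun ω k => X (n + k) ω) ⁻¹' B) = P A * P ((fun ω k => X k ω) ⁻¹' B) := by
  have hindep := indep_iSup_of_disjoint (fun i => (hmeas i).comap_le)
    ((iIndepFun_iff_iIndep _ _ _).1 hiid) (Set.Iio_disjoint_Ici (le_refl n))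
  have hshift : Measurable[⨆ i ∈ Set.Ici n, MeasurableSpace.comap (X i) inferInstance]
      (fun ω k => X (n + k) ω) :=
    @measurable_pi_lambda Ω ℕ (fun _ => β)
      (⨆ i ∈ Set.Ici n, MeasurableSpace.comap (X i) inferInstance) _ _ fun k =>
      (comap_measurable (X (n + k))).mono
        (le_iSup₂ (f := fun i (_ : i ∈ Set.Ici n) => MeasurableSpace.comap (X i) inferInstance)
          (n + k) (Nat.le_add_right n k)) le_rfl
  have hlaw_shift : P.map (fun ω k => X (n + k) ω) = P.map (fun ω k => X k ω) := by
    rw [(hiid.precomp (add_right_injective n)).map_fun_eq_infinitePi_map (fun k => hmeas _),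
      hiid.map_fun_eq_infinitePi_map hmeas]
    simp only [hlaw]
  have hB' : MeasurableSet[⨆ i ∈ Set.Ici n, MeasurableSpace.comap (X i) inferInstance]
      ((fun ω k => X (n + k) ω) ⁻¹' B) := hshift hB
  rw [(Indep_iff _ _ _).1 hindep A _ hA hB',
    ← Measure.map_apply (measurable_pi_iff.2 fun k => hmeas _) hB, hlaw_shift,
    Measure.map_apply (measurable_pi_iff.2 hmeas) hB]

namespace RandomWalk

section Walk

variable [Group Γ] (X : ℕ → Ω → Γ)

lemma walk_zero (x : Γ) (ω : Ω) : walk x X 0 ω = x := mul_one x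

lemma walk_succ (x : Γ) (n : ℕ) (ω : Ω) : walk x X (n + 1) ω = walk x X n ω * X n ω := by
  simp [walk, List.range_succ, mul_assoc]

lemma walk_add (x : Γ) (n m : ℕ) (ω : Ω) :
    walk x X (n + m) ω = walk (walk x X n ω) (fun k ω => X (n + k) ω) m ω := by
  simp [walk, List.range_add, mul_assoc, Function.comp_def]

lemma walk_eq_mul_walk_one (x : Γ) (n : ℕ) (ω : Ω) : walk x X n ω = x * walk 1 X n ω := by
  simp [walk]

variable {X}

lemma measurable_walk [MeasurableSpace Γ] [MeasurableMul₂ Γ] {m : MeasurableSpace Ω} {n : ℕ}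
    (hX : ∀ i < n, Measurable (X i)) (x : Γ) : Measurable (walk x X n) := by
  induction n with
  | zero => simpa only [funext (walk_zero X x)] using measurable_const
  | succ n ih =>
    simp_rw [funext (walk_succ X x n)]
    exact (ih fun i hi => hX i (by omega)).mul (hX n n.lt_succ_self)

lemma measurableSet_walk_mem [MeasurableSpace Γ] [Countable Γ] [MeasurableSingletonClass Γ]
    [MeasurableSpace Ω] (hmeas : ∀ k, Measurable (X k)) (x : Γ) (n : ℕ) (s : Set Γ) :
    MeasurableSet {ω | walk x X n ω ∈ s} :=
  measurable_walk (fun i _ => hmeas i) x s.to_countable.measurableSet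

lemma measurableSet_exists_walk_mem [MeasurableSpace Γ] [Countable Γ]
    [MeasurableSingletonClass Γ] [MeasurableSpace Ω] (hmeas : ∀ k, Measurable (X k)) (x : Γ)
    (s : Set Γ) : MeasurableSet {ω | ∃ n, walk x X n ω ∈ s} := by
  simp only [Set.ofPred_exists]
  exact .iUnion fun n => measurableSet_walk_mem hmeas x n s

lemma measurableSet_escape [MeasurableSpace Γ] [Countable Γ] [MeasurableSingletonClass Γ]
    [MeasurableSpace Ω] (hmeas : ∀ k, Measurable (X k)) (x : Γ) (n : ℕ) (s : Set Γ) :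
    MeasurableSet {ω | ∀ m > n, walk x X m ω ∉ s} := by
  simp only [Set.ofPred_forall]
  exact .iInter fun m => .iInter fun _ => measurableSet_walk_mem hmeas x m sᶜ

end Walk

section Green

variable [Group Γ] [Countable Γ] [MeasurableSpace Γ] [MeasurableSingletonClass Γ]
  [MeasurableSpace Ω] {P : Measure Ω} {μ : Measure Γ} {X : ℕ → Ω → Γ}

lemma measure_walk_eq_and_escape (hmeas : ∀ k, Measurable (X k)) (hiid : iIndepFun X P)
    (hlaw : ∀ k, P.map (X k) = μ) (x z : Γ) (s : Set Γ) (n : ℕ) :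
    P {ω | walk x X n ω = z ∧ ∀ m > n, walk x X m ω ∉ s}
      = P {ω | walk x X n ω = z} * P {ω | ∀ m > 0, walk z X m ω ∉ s} := by
  have hset : {ω | walk x X n ω = z ∧ ∀ m > n, walk x X m ω ∉ s}
      = {ω | walk x X n ω = z} ∩ (fun ω k => X (n + k) ω) ⁻¹'
          {f | ∀ m > 0, walk z (fun k (f : ℕ → Γ) => f k) m f ∉ s} := by
    ext ω
    refine and_congr_right fun hz => ?_
    change (∀ m > n, walk x X m ω ∉ s) ↔ ∀ m > 0, walk z (fun k ω => X (n + k) ω) m ω ∉ s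
    simp_rw [← hz, ← walk_add]
    exact ⟨fun h m _ => h _ (by omega),
      fun h m hm => by simpa only [Nat.add_sub_cancel' hm.le] using h (m - n) (by omega)⟩
  have hpast : MeasurableSet[⨆ i ∈ Set.Iio n, MeasurableSpace.comap (X i) inferInstance]
      {ω | walk x X n ω = z} :=
    measurable_walk (fun i hi => (comap_measurable (X i)).mono
      (le_iSup₂ (f := fun i (_ : i ∈ Set.Iio n) => MeasurableSpace.comap (X i) inferInstance)
        i hi) le_rfl) x (measurableSet_singleton z)
  rw [hset, hiid.measure_inter_preimage_shift hmeas hlaw hpast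
    (measurableSet_escape (fun k => measurable_pi_apply k) z 0 s)]
  rfl

/-- Last-exit decomposition: split according to the time and place of the last visit to `S`. -/
lemma sum_greenFn_mul_escape_eq (hmeas : ∀ k, Measurable (X k)) (hiid : iIndepFun X P)
    (hlaw : ∀ k, P.map (X k) = μ) (x : Γ) (S : Finset Γ) :
    ∑ z ∈ S, greenFn P X x z * P {ω | ∀ m > 0, walk z X m ω ∉ S}
      = P {ω | ∃ n, walk x X n ω ∈ S ∧ ∀ m > n, walk x X m ω ∉ S} := by
  have hlast : ∀ n, P {ω | walk x X n ω ∈ S ∧ ∀ m > n, walk x X m ω ∉ S}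
      = ∑ z ∈ S, P {ω | walk x X n ω = z ∧ ∀ m > n, walk x X m ω ∉ S} := by
    intro n
    have hunion := measure_biUnion_finset (μ := P) (s := S)
      (f := fun z => {ω | walk x X n ω = z ∧ ∀ m > n, walk x X m ω ∉ S})
      (fun z _ z' _ hzz' => Set.disjoint_left.2 fun ω hz hz' => hzz' (hz.1.symm.trans hz'.1))
      fun z _ => (measurableSet_walk_mem hmeas x n {z}).inter (measurableSet_escape hmeas x n _)
    rw [← hunion]
    congr 1
    ext ω
    simp
  have hdisj : Pairwise (Function.onFun Disjoint
      fun n => {ω | walk x X n ω ∈ S ∧ ∀ m > n, walk x X m ω ∉ S}) :=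
    (pairwise_disjoint_on _).2 fun n n' hnn' =>
      Set.disjoint_left.2 fun ω h h' => h.2 n' hnn' h'.1
  rw [Set.ofPred_exists, measure_iUnion hdisj fun n =>
    (measurableSet_walk_mem hmeas x n S).inter (measurableSet_escape hmeas x n _)]
  simp_rw [hlast, ← Finset.mem_coe, measure_walk_eq_and_escape hmeas hiid hlaw]
  rw [Summable.tsum_finsetSum fun _ _ => ENNReal.summable]
  exact Finset.sum_congr rfl fun z _ => ENNReal.tsum_mul_right.symm

lemma greenFn_ne_top [IsProbabilityMeasure P] (hmeas : ∀ k, Measurable (X k))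
    (hiid : iIndepFun X P) (hlaw : ∀ k, P.map (X k) = μ)
    (htrans : P {ω | ∃ n ≥ 1, walk 1 X n ω = 1} < 1) (x z : Γ) :
    greenFn P X x z ≠ ∞ := by
  have hescape : {ω | ∀ m > 0, walk z X m ω ∉ ({z} : Finset Γ)}
      = {ω | ∃ n ≥ 1, walk 1 X n ω = 1}ᶜ := by
    ext ω
    simp only [Set.mem_compl_iff, Set.mem_ofPred_eq, not_exists, not_and, Finset.mem_singleton,
      walk_eq_mul_walk_one X z, mul_eq_left]
    exact Iff.rfl
  have hle := sum_greenFn_mul_escape_eq hmeas hiid hlaw x {z} ▸ prob_le_one (μ := P)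
  have hreturn : MeasurableSet {ω | ∃ n ≥ 1, walk 1 X n ω = 1} := by
    simp only [Set.ofPred_exists]
    exact .iUnion fun n => (MeasurableSet.const _).inter (measurableSet_walk_mem hmeas 1 n {1})
  rw [Finset.sum_singleton, hescape, prob_compl_eq_one_sub hreturn] at hle
  intro htop
  rw [htop, ENNReal.top_mul (tsub_pos_of_lt htrans).ne'] at hle
  exact absurd hle (by simp)

lemma ae_eventually_walk_notMem [IsProbabilityMeasure P] (hmeas : ∀ k, Measurable (X k))
    (hiid : iIndepFun X P) (hlaw : ∀ k, P.map (X k) = μ)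
    (htrans : P {ω | ∃ n ≥ 1, walk 1 X n ω = 1} < 1) (x : Γ) (S : Finset Γ) :
    ∀ᵐ ω ∂P, ∀ᶠ n in atTop, walk x X n ω ∉ S := by
  refine ae_eventually_notMem (s := fun n => {ω | walk x X n ω ∈ S}) ?_
  have hfiber : ∀ n, P {ω | walk x X n ω ∈ S} = ∑ z ∈ S, P {ω | walk x X n ω = z} := fun n =>
    (sum_measure_preimage_singleton S fun z _ => measurableSet_walk_mem hmeas x n {z}).symm
  simp_rw [hfiber]
  rw [Summable.tsum_finsetSum fun _ _ => ENNReal.summable]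
  exact ENNReal.sum_ne_top.2 fun z _ => greenFn_ne_top hmeas hiid hlaw htrans x z

/-- Transience makes the last visit to `S` exist almost surely. -/
lemma measure_hit_eq_sum_greenFn_mul_escape [IsProbabilityMeasure P]
    (hmeas : ∀ k, Measurable (X k)) (hiid : iIndepFun X P) (hlaw : ∀ k, P.map (X k) = μ)
    (htrans : P {ω | ∃ n ≥ 1, walk 1 X n ω = 1} < 1) (x : Γ) (S : Finset Γ) :
    P {ω | ∃ n, walk x X n ω ∈ S}
      = ∑ z ∈ S, greenFn P X x z * P {ω | ∀ m > 0, walk z X m ω ∉ S} := by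
  rw [sum_greenFn_mul_escape_eq hmeas hiid hlaw]
  refine measure_congr (eventuallyEq_set.2 ?_)
  filter_upwards [ae_eventually_walk_notMem hmeas hiid hlaw htrans x S] with ω hω
  exact ⟨fun h => Nat.exists_max_of_eventually_not h hω, fun ⟨n, hn, _⟩ => ⟨n, hn⟩⟩

lemma mul_measure_hit_le_one [IsProbabilityMeasure P] (hmeas : ∀ k, Measurable (X k))
    (hiid : iIndepFun X P) (hlaw : ∀ k, P.map (X k) = μ)
    (htrans : P {ω | ∃ n ≥ 1, walk 1 X n ω = 1} < 1) {c : ℝ≥0∞} {x y : Γ} {S : Finset Γ}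
    (hS : ∀ z ∈ S, c * greenFn P X x z ≤ greenFn P X y z) :
    c * P {ω | ∃ n, walk x X n ω ∈ S} ≤ 1 :=
  calc c * P {ω | ∃ n, walk x X n ω ∈ S}
      = ∑ z ∈ S, c * greenFn P X x z * P {ω | ∀ m > 0, walk z X m ω ∉ S} := by
        rw [measure_hit_eq_sum_greenFn_mul_escape hmeas hiid hlaw htrans, Finset.mul_sum]
        simp_rw [mul_assoc]
    _ ≤ ∑ z ∈ S, greenFn P X y z * P {ω | ∀ m > 0, walk z X m ω ∉ S} :=
        Finset.sum_le_sum fun z hz => by gcongr; exact hS z hz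
    _ ≤ 1 := sum_greenFn_mul_escape_eq hmeas hiid hlaw y S ▸ prob_le_one

lemma measure_hit_le_inv [IsProbabilityMeasure P] (hmeas : ∀ k, Measurable (X k))
    (hiid : iIndepFun X P) (hlaw : ∀ k, P.map (X k) = μ)
    (htrans : P {ω | ∃ n ≥ 1, walk 1 X n ω = 1} < 1) {c : ℝ≥0∞} {x y : Γ} {R : Set Γ}
    (hR : ∀ z ∈ R, c * greenFn P X x z ≤ greenFn P X y z) :
    P {ω | ∃ n, walk x X n ω ∈ R} ≤ c⁻¹ := by
  classical
  have hunion : {ω | ∃ n, walk x X n ω ∈ R}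
      = ⋃ F : Finset Γ, {ω | ∃ n, walk x X n ω ∈ F.filter (· ∈ R)} := by
    ext ω
    simp only [Set.mem_ofPred_eq, Set.mem_iUnion, Finset.mem_filter]
    exact ⟨fun ⟨n, hn⟩ => ⟨{walk x X n ω}, n, Finset.mem_singleton_self _, hn⟩,
      fun ⟨_, n, _, hn⟩ => ⟨n, hn⟩⟩
  have hmono : Monotone fun F : Finset Γ => {ω | ∃ n, walk x X n ω ∈ F.filter (· ∈ R)} :=
    fun F F' hFF' ω ⟨n, hn⟩ => ⟨n, Finset.monotone_filter_left _ hFF' hn⟩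
  rw [hunion, hmono.measure_iUnion]
  refine iSup_le fun F => ENNReal.le_inv_iff_mul_le.2 ?_
  rw [mul_comm]
  exact mul_measure_hit_le_one hmeas hiid hlaw htrans fun z hz =>
    hR z (Finset.mem_filter.1 hz).2

end Green

end RandomWalk

theorem martin_kernel_maximal_inequality_general
    [Group Γ] [Countable Γ] [MeasurableSpace Γ] [MeasurableSingletonClass Γ]
    [MeasurableSpace Ω] (P : Measure Ω) [IsProbabilityMeasure P]
    (μ : Measure Γ)
    (X : ℕ → Ω → Γ) (hmeas : ∀ k, Measurable (X k))
    (hiid : iIndepFun X P)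
    (hlaw : ∀ k, Measure.map (X k) P = μ)
    (htrans : P {ω | ∃ n ≥ 1, walk 1 X n ω = 1} < 1)
    (Y : Ω → Γ) (hYmeas : Measurable Y)
    (hYindep : IndepFun Y (fun ω k => X k ω) P) :
    ∀ a : ℝ, 0 < a →
      P {ω | ∃ n : ℕ, a ≤ martinK P X (Y ω) (walk 1 X n ω)}
        ≤ ENNReal.ofReal (1 / a) := by
  intro a ha
  let hits (x : Γ) : Set (ℕ → Γ) :=
    {f | ∃ n, walk 1 (fun k (f : ℕ → Γ) => f k) n f ∈
      {z | ENNReal.ofReal a * greenFn P X 1 z ≤ greenFn P X x z}}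
  calc P {ω | ∃ n : ℕ, a ≤ martinK P X (Y ω) (walk 1 X n ω)}
      ≤ P {ω | (fun k => X k ω) ∈ hits (Y ω)} :=
        measure_mono fun ω ⟨n, hn⟩ => ⟨n, ENNReal.ofReal_mul_le_of_le_toReal_div ha hn⟩
    _ ≤ (ENNReal.ofReal a)⁻¹ :=
        hYindep.measure_setOf_mem_le (B := hits) hYmeas
          (fun x => RandomWalk.measurableSet_exists_walk_mem measurable_pi_apply 1 _)
          fun x => RandomWalk.measure_hit_le_inv hmeas hiid hlaw htrans fun _ hz => hz
    _ = ENNReal.ofReal (1 / a) := by rw [one_div, ENNReal.ofReal_inv_of_pos ha]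

/-- maximal inequality for the Martin kernel along the walk:
if `X̃₁ = Y` has the reversed law `μ̃` and is independent of the walk, then
`ℙ⊗ℙ̃[sup_n K(X̃₁, Z_n) ≥ a] ≤ 1/a` for every `a > 0`. -/
theorem martin_kernel_maximal_inequality
    [Group Γ] [Countable Γ] [MeasurableSpace Γ] [MeasurableSingletonClass Γ]
    [MeasurableSpace Ω] (P : Measure Ω) [IsProbabilityMeasure P]
    (μ : Measure Γ) [IsProbabilityMeasure μ]
    (X : ℕ → Ω → Γ) (hmeas : ∀ k, Measurable (X k))
    (hiid : iIndepFun X P)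
    (hlaw : ∀ k, Measure.map (X k) P = μ)
    (hgen : Subgroup.closure {g : Γ | μ {g} ≠ 0} = ⊤)
    (htrans : P {ω | ∃ n ≥ 1, walk 1 X n ω = 1} < 1)
    (Y : Ω → Γ) (hYmeas : Measurable Y)
    (hYlaw : Measure.map Y P = Measure.map (fun g : Γ => g⁻¹) μ)
    (hYindep : IndepFun Y (fun ω k => X k ω) P) :
    ∀ a : ℝ, 0 < a →
      P {ω | ∃ n : ℕ, a ≤ martinK P X (Y ω) (walk 1 X n ω)}
        ≤ ENNReal.ofReal (1 / a) :=
  martin_kernel_maximal_inequality_general P μ X hmeas hiid hlaw htrans Y hYmeas hYindep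
end
end

section
/- Let Γ be a countable group and μ a probability measure on Γ whose support generates Γ, with finite entropy H(μ), such that the associated random walk is transient. Let X̃₁ be a random variable of law μ̃(x) = μ(x⁻¹) independent of the walk (Z_n) started at e. Then the random variable sup_{n≥0} |ln K(X̃₁, Z_n)| is integrable: E ⊗ Ẽ[ sup_{n≥0} |ln K(X̃₁, Z_n)| ] < ∞, where K(x, y) = G(x, y)/G(e, y). -/
open MeasureTheory ProbabilityTheory Filter
open scoped ENNReal
set_option linter.unusedSectionVars false
set_option maxHeartbeats 1000000

noncomputable section

variable {Γ Ω : Type*}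

section AuxSALM
variable {Γ Ω : Type*} [Group Γ] [Countable Γ] [MeasurableSpace Γ]
  [MeasurableSingletonClass Γ] [MeasurableSpace Ω]

private lemma salm_measSet {β : Type*} [Countable β] [MeasurableSpace β]
    [MeasurableSingletonClass β] (s : Set β) : MeasurableSet s :=
  s.to_countable.measurableSet

private def salmLv (f : ℕ → Γ) (s J : ℕ) : List Γ := (List.range J).map fun i => f (s + i)

@[simp] private lemma salmLv_length (f : ℕ → Γ) (s J : ℕ) : (salmLv f s J).length = J := by
  simp [salmLv]

@[simp] private lemma salmLv_zero (f : ℕ → Γ) (s : ℕ) : salmLv f s 0 = [] := by simp [salmLv]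

private lemma salmLv_succ (f : ℕ → Γ) (s J : ℕ) :
    salmLv f s (J+1) = salmLv f s J ++ [f (s+J)] := by
  simp [salmLv, List.range_succ]

private lemma salmLv_append (f : ℕ → Γ) (n J : ℕ) :
    salmLv f 0 (n+J) = salmLv f 0 n ++ salmLv f n J := by
  induction J with
  | zero => simp
  | succ J ih =>
      rw [show n + (J+1) = (n+J) + 1 by omega, salmLv_succ, ih, salmLv_succ, List.append_assoc]
      simp

private lemma salmLv_eq_iff {f : ℕ → Γ} {s J : ℕ} {l : List Γ} :
    salmLv f s J = l ↔ l.length = J ∧ ∀ i < J, f (s+i) = l.getD i 1 := by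
  constructor
  · rintro rfl
    refine ⟨by simp, fun i hi => ?_⟩
    rw [List.getD_eq_getElem _ _ (by simpa using hi)]
    simp [salmLv]
  · rintro ⟨hlen, h⟩
    apply List.ext_getElem (by simpa using hlen.symm)
    intro i h1 h2
    have hi : i < J := by simpa using h1
    have h3 := h i hi
    rw [List.getD_eq_getElem _ _ (by omega)] at h3
    simpa [salmLv] using h3

private lemma salmLv_take {f : ℕ → Γ} {s : ℕ} : ∀ {J j : ℕ}, j ≤ J →
    (salmLv f s J).take j = salmLv f s j := by
  intro J
  induction J with
  | zero =>
      intro j hj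
      have : j = 0 := by omega
      subst this; simp
  | succ J ih =>
      intro j hj
      rcases Nat.lt_or_ge j (J+1) with h | h
      · rw [salmLv_succ, List.take_append_of_le_length (by simp; omega), ih (by omega)]
      · have : j = J + 1 := by omega
        subst this
        rw [List.take_of_length_le (by simp)]

/-- product of the block of increments `X s, …, X (s+J-1)` -/
private def salmW (X : ℕ → Ω → Γ) (s J : ℕ) (ω : Ω) : Γ :=
  (salmLv (fun k => X k ω) s J).prod

private lemma salmW_add (X : ℕ → Ω → Γ) (n j : ℕ) (ω : Ω) :
    salmW X 0 (n+j) ω = salmW X 0 n ω * salmW X n j ω := by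
  rw [salmW, salmLv_append, List.prod_append]; rfl

private lemma salm_walk_eq (x : Γ) (X : ℕ → Ω → Γ) (n : ℕ) (ω : Ω) :
    walk x X n ω = x * salmW X 0 n ω := by
  simp [walk, salmW, salmLv]

variable (P : Measure Ω) [IsProbabilityMeasure P] (μ : Measure Γ) [IsProbabilityMeasure μ]
  (X : ℕ → Ω → Γ) (hmeas : ∀ k, Measurable (X k))
  (hiid : iIndepFun (m := fun _ => ‹MeasurableSpace Γ›) X P)
  (hlaw : ∀ k, Measure.map (X k) P = μ)

include hmeas in
private lemma salm_measLvSingleton (s J : ℕ) (l : List Γ) :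
    MeasurableSet {ω | salmLv (fun k => X k ω) s J = l} := by
  by_cases hl : l.length = J
  · have : {ω | salmLv (fun k => X k ω) s J = l}
        = ⋂ i ∈ Finset.range J, X (s+i) ⁻¹' {l.getD i 1} := by
      ext ω
      simp only [Set.mem_setOf_eq, salmLv_eq_iff, Set.mem_iInter, Finset.mem_range,
        Set.mem_preimage, Set.mem_singleton_iff]
      tauto
    rw [this]
    exact MeasurableSet.biInter (Finset.range J).countable_toSet
      fun i _ => (hmeas _) (measurableSet_singleton _)
  · have : {ω | salmLv (fun k => X k ω) s J = l} = ∅ := by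
      ext ω; simp only [Set.mem_setOf_eq, salmLv_eq_iff, Set.mem_empty_iff_false, iff_false]
      tauto
    rw [this]; exact MeasurableSet.empty

include hmeas in
private lemma salm_measCyl (s J : ℕ) (Ls : Set (List Γ)) :
    MeasurableSet {ω | salmLv (fun k => X k ω) s J ∈ Ls} := by
  have : {ω | salmLv (fun k => X k ω) s J ∈ Ls}
      = ⋃ (l : Ls), {ω | salmLv (fun k => X k ω) s J = (l : List Γ)} := by
    ext ω; simp
  rw [this]
  exact MeasurableSet.iUnion fun l => salm_measLvSingleton X hmeas s J l

include hmeas in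
private lemma salm_measW (s J : ℕ) : Measurable (salmW X s J) := by
  apply measurable_to_countable'
  intro z
  exact salm_measCyl X hmeas s J (List.prod ⁻¹' {z})

include hiid hlaw hmeas in
private lemma salm_atom (s J : ℕ) (e : ℕ → Γ) :
    P (⋂ i ∈ Finset.range J, X (s + i) ⁻¹' {e i}) = ∏ i ∈ Finset.range J, μ {e i} := by
  classical
  have h1 : (⋂ i ∈ Finset.range J, X (s+i) ⁻¹' {e i})
      = ⋂ i ∈ (Finset.range J).image (s + ·), X i ⁻¹' {e (i - s)} := by
    ext ω
    simp only [Set.mem_iInter, Finset.mem_range, Finset.mem_image, Set.mem_preimage,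
      Set.mem_singleton_iff]
    constructor
    · rintro h i ⟨a, ha, rfl⟩
      simpa [Nat.add_sub_cancel_left] using h a ha
    · intro h a ha
      have := h (s + a) ⟨a, ha, rfl⟩
      simpa [Nat.add_sub_cancel_left] using this
  rw [h1, (iIndepFun_iff_measure_inter_preimage_eq_mul.1 hiid) ((Finset.range J).image (s + ·))
      (fun i _ => measurableSet_singleton _)]
  rw [Finset.prod_image (by intro a _ b _ h; simp only at h; omega)]
  refine Finset.prod_congr rfl fun i _ => ?_
  rw [← hlaw (s + i), Measure.map_apply (hmeas _) (measurableSet_singleton _)]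
  simp [Nat.add_sub_cancel_left]

private def salmwt (μ : Measure Γ) (l : List Γ) : ℝ≥0∞ :=
  ∏ i ∈ Finset.range l.length, μ {l.getD i 1}

private lemma salmwt_append (l m : List Γ) : salmwt μ (l ++ m) = salmwt μ l * salmwt μ m := by
  rw [salmwt, List.length_append, Finset.prod_range_add, salmwt, salmwt]
  congr 1
  · exact Finset.prod_congr rfl fun i hi => by
      rw [List.getD_append _ _ _ _ (by simpa using hi)]
  · refine Finset.prod_congr rfl fun i hi => ?_
    rw [List.getD_append_right _ _ _ _ (by omega)]
    simp

include hiid hlaw hmeas in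
private lemma salm_probLv (s J : ℕ) (l : List Γ) :
    P {ω | salmLv (fun k => X k ω) s J = l}
      = if l.length = J then salmwt μ l else 0 := by
  by_cases hl : l.length = J
  · have h1 : {ω | salmLv (fun k => X k ω) s J = l}
        = ⋂ i ∈ Finset.range J, X (s+i) ⁻¹' {l.getD i 1} := by
      ext ω
      simp only [Set.mem_setOf_eq, salmLv_eq_iff, Set.mem_iInter, Finset.mem_range,
        Set.mem_preimage, Set.mem_singleton_iff]
      tauto
    rw [h1, salm_atom P μ X hmeas hiid hlaw s J, if_pos hl, salmwt, hl]
  · rw [if_neg hl]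
    have : {ω | salmLv (fun k => X k ω) s J = l} = ∅ := by
      ext ω; simp only [Set.mem_setOf_eq, salmLv_eq_iff, Set.mem_empty_iff_false, iff_false]
      tauto
    rw [this]; exact measure_empty

include hiid hlaw hmeas in
private lemma salm_probCyl (s J : ℕ) (Ls : Set (List Γ)) :
    P {ω | salmLv (fun k => X k ω) s J ∈ Ls}
      = ∑' l : ↥{l ∈ Ls | l.length = J}, salmwt μ (l : List Γ) := by
  have hset : {ω | salmLv (fun k => X k ω) s J ∈ Ls}
      = ⋃ (l : ↥{l ∈ Ls | l.length = J}), {ω | salmLv (fun k => X k ω) s J = (l : List Γ)} := by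
    ext ω
    simp only [Set.mem_setOf_eq, Set.mem_iUnion, Subtype.exists, exists_prop, Set.mem_sep_iff]
    constructor
    · intro h; exact ⟨salmLv (fun k => X k ω) s J, ⟨h, by simp⟩, rfl⟩
    · rintro ⟨l, ⟨hl, _⟩, h⟩; rw [h]; exact hl
  rw [hset, measure_iUnion ?disj ?meas]
  case disj =>
    intro l m hlm
    refine Set.disjoint_left.mpr fun ω h1 h2 => hlm ?_
    exact Subtype.ext (((h1 : salmLv (fun k => X k ω) s J = (l : List Γ))).symm.trans
      (h2 : salmLv (fun k => X k ω) s J = (m : List Γ)))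
  case meas => exact fun l => salm_measLvSingleton X hmeas s J l
  exact tsum_congr fun l => by
    rw [salm_probLv P μ X hmeas hiid hlaw s J, if_pos l.2.2]

include hiid hlaw hmeas in
private lemma salm_probInter (n J : ℕ) (Ls Ms : Set (List Γ)) :
    P ({ω | salmLv (fun k => X k ω) 0 n ∈ Ls} ∩ {ω | salmLv (fun k => X k ω) n J ∈ Ms})
      = P {ω | salmLv (fun k => X k ω) 0 n ∈ Ls}
        * P {ω | salmLv (fun k => X k ω) 0 J ∈ Ms} := by
  have hset : {ω | salmLv (fun k => X k ω) 0 n ∈ Ls} ∩ {ω | salmLv (fun k => X k ω) n J ∈ Ms}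
      = ⋃ (p : ↥{l ∈ Ls | l.length = n} × ↥{m ∈ Ms | m.length = J}),
          {ω | salmLv (fun k => X k ω) 0 (n+J) = (p.1 : List Γ) ++ (p.2 : List Γ)} := by
    ext ω
    simp only [Set.mem_inter_iff, Set.mem_setOf_eq, Set.mem_iUnion]
    constructor
    · rintro ⟨h1, h2⟩
      exact ⟨(⟨salmLv (fun k => X k ω) 0 n, h1, by simp⟩,
        ⟨salmLv (fun k => X k ω) n J, h2, by simp⟩), salmLv_append (fun k => X k ω) n J⟩
    · rintro ⟨⟨l, m⟩, hp⟩
      have heq : salmLv (fun k => X k ω) 0 n ++ salmLv (fun k => X k ω) n J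
          = (l : List Γ) ++ (m : List Γ) := (salmLv_append (fun k => X k ω) n J).symm.trans hp
      have hlen : (salmLv (fun k => X k ω) 0 n).length = (l : List Γ).length := by
        simp [l.2.2]
      obtain ⟨h1, h2⟩ := List.append_inj heq hlen
      exact ⟨h1 ▸ l.2.1, h2 ▸ m.2.1⟩
  rw [hset, measure_iUnion ?disj ?meas]
  case disj =>
    intro p q hpq
    refine Set.disjoint_left.mpr fun ω h1 h2 => hpq ?_
    have heq : (p.1 : List Γ) ++ (p.2 : List Γ) = (q.1 : List Γ) ++ (q.2 : List Γ) :=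
      ((h1 : salmLv (fun k => X k ω) 0 (n+J) = _)).symm.trans
        (h2 : salmLv (fun k => X k ω) 0 (n+J) = _)
    obtain ⟨e1, e2⟩ := List.append_inj heq (by simp [p.1.2.2, q.1.2.2])
    exact Prod.ext (Subtype.ext e1) (Subtype.ext e2)
  case meas => exact fun p => salm_measLvSingleton X hmeas 0 (n+J) _
  calc ∑' (p : ↥{l ∈ Ls | l.length = n} × ↥{m ∈ Ms | m.length = J}),
        P {ω | salmLv (fun k => X k ω) 0 (n+J) = (p.1 : List Γ) ++ (p.2 : List Γ)}
      = ∑' (p : ↥{l ∈ Ls | l.length = n} × ↥{m ∈ Ms | m.length = J}),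
          salmwt μ (p.1 : List Γ) * salmwt μ (p.2 : List Γ) := by
        refine tsum_congr fun p => ?_
        rw [salm_probLv P μ X hmeas hiid hlaw 0 (n+J), if_pos (by simp [p.1.2.2, p.2.2.2]),
          salmwt_append]
    _ = (∑' (l : ↥{l ∈ Ls | l.length = n}), salmwt μ (l : List Γ))
        * (∑' (m : ↥{m ∈ Ms | m.length = J}), salmwt μ (m : List Γ)) := by
        rw [ENNReal.tsum_prod (f := fun (l : ↥{l ∈ Ls | l.length = n})
          (m : ↥{m ∈ Ms | m.length = J}) => salmwt μ (l : List Γ) * salmwt μ (m : List Γ))]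
        simp_rw [ENNReal.tsum_mul_left]
        rw [ENNReal.tsum_mul_right]
    _ = _ := by
        rw [← salm_probCyl P μ X hmeas hiid hlaw 0 n Ls,
          ← salm_probCyl P μ X hmeas hiid hlaw 0 J Ms]

include hmeas in
private lemma salm_measWeq (x y : Γ) (n : ℕ) :
    MeasurableSet {ω | x * salmW X 0 n ω = y} :=
  (salm_measW X hmeas 0 n) (salm_measSet {z | x * z = y})

include hmeas in
private lemma salm_measFut (x : Γ) (A : Set Γ) (n : ℕ) :
    MeasurableSet {ω | ∀ j, 1 ≤ j → x * salmW X 0 (n+j) ω ∉ A} := by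
  have h : {ω | ∀ j, 1 ≤ j → x * salmW X 0 (n+j) ω ∉ A}
      = ⋂ j : ℕ, {ω | 1 ≤ j → x * salmW X 0 (n+j) ω ∉ A} := by
    ext ω; simp only [Set.mem_setOf_eq, Set.mem_iInter]
  rw [h]
  refine MeasurableSet.iInter fun j => ?_
  by_cases hj : 1 ≤ j
  · have h2 : {ω | 1 ≤ j → x * salmW X 0 (n+j) ω ∉ A}
        = salmW X 0 (n+j) ⁻¹' {z | x * z ∉ A} := by
      ext ω; simp [hj]
    rw [h2]; exact (salm_measW X hmeas 0 (n+j)) (salm_measSet _)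
  · have h2 : {ω | 1 ≤ j → x * salmW X 0 (n+j) ω ∉ A} = Set.univ := by
      ext ω; simp [hj]
    rw [h2]; exact MeasurableSet.univ

include hiid hlaw hmeas in
private lemma salm_factInf (n : ℕ) (z y : Γ) (A : Set Γ) :
    P ({ω | salmW X 0 n ω = z} ∩ {ω | ∀ j, 1 ≤ j → y * salmW X n j ω ∉ A})
      = P {ω | salmW X 0 n ω = z} * P {ω | ∀ j, 1 ≤ j → y * salmW X 0 j ω ∉ A} := by
  classical
  have hcylD : ∀ s J : ℕ, {ω | salmLv (fun k => X k ω) s J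
        ∈ {l : List Γ | ∀ j, 1 ≤ j → j ≤ J → y * (l.take j).prod ∉ A}}
      = {ω | ∀ j, 1 ≤ j → j ≤ J → y * salmW X s j ω ∉ A} := by
    intro s J
    ext ω
    simp only [Set.mem_setOf_eq]
    constructor
    · intro h j h1 h2
      have h3 := h j h1 h2
      rwa [salmLv_take h2] at h3
    · intro h j h1 h2
      have h3 := h j h1 h2
      rw [salmLv_take h2]
      exact h3
  have hwcyl : {ω | salmW X 0 n ω = z}
      = {ω | salmLv (fun k => X k ω) 0 n ∈ (List.prod ⁻¹' {z})} := rfl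
  have hfutJ : ∀ s : ℕ, {ω | ∀ j, 1 ≤ j → y * salmW X s j ω ∉ A}
      = ⋂ J : ℕ, {ω | ∀ j, 1 ≤ j → j ≤ J → y * salmW X s j ω ∉ A} := by
    intro s; ext ω
    simp only [Set.mem_setOf_eq, Set.mem_iInter]
    exact ⟨fun h J j h1 _ => h j h1, fun h j h1 => h j j h1 le_rfl⟩
  have hanti : ∀ s : ℕ, Antitone fun J => {ω | ∀ j, 1 ≤ j → j ≤ J → y * salmW X s j ω ∉ A} := by
    intro s J K hJK ω h j h1 h2
    exact h j h1 (h2.trans hJK)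
  have hmeasJ : ∀ s J : ℕ, MeasurableSet {ω | ∀ j, 1 ≤ j → j ≤ J → y * salmW X s j ω ∉ A} := by
    intro s J; rw [← hcylD]; exact salm_measCyl X hmeas s J _
  have L1 : P ({ω | salmW X 0 n ω = z} ∩ {ω | ∀ j, 1 ≤ j → y * salmW X n j ω ∉ A})
      = ⨅ J : ℕ, P ({ω | salmW X 0 n ω = z}
          ∩ {ω | ∀ j, 1 ≤ j → j ≤ J → y * salmW X n j ω ∉ A}) := by
    rw [hfutJ n, Set.inter_iInter]
    exact Antitone.measure_iInter
      (fun J K hJK => Set.inter_subset_inter_right _ (hanti n hJK))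
      (fun J => ((salm_measCyl X hmeas 0 n (List.prod ⁻¹' {z})).inter
        (hmeasJ n J)).nullMeasurableSet)
      ⟨0, measure_ne_top P _⟩
  have L2 : ∀ J : ℕ, P ({ω | salmW X 0 n ω = z}
        ∩ {ω | ∀ j, 1 ≤ j → j ≤ J → y * salmW X n j ω ∉ A})
      = P {ω | salmW X 0 n ω = z} * P {ω | ∀ j, 1 ≤ j → j ≤ J → y * salmW X 0 j ω ∉ A} := by
    intro J
    rw [hwcyl, ← hcylD n J, salm_probInter P μ X hmeas hiid hlaw n J, hcylD 0 J, ← hwcyl]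
  have L3 : P {ω | ∀ j, 1 ≤ j → y * salmW X 0 j ω ∉ A}
      = ⨅ J : ℕ, P {ω | ∀ j, 1 ≤ j → j ≤ J → y * salmW X 0 j ω ∉ A} := by
    rw [hfutJ 0]
    exact Antitone.measure_iInter (hanti 0) (fun J => (hmeasJ 0 J).nullMeasurableSet)
      ⟨0, measure_ne_top P _⟩
  rw [L1, L3]
  simp_rw [L2]
  exact (ENNReal.mul_iInf (fun h _ => absurd h (measure_ne_top P _))).symm

include hiid hlaw hmeas in
private lemma salm_lastVisit (x : Γ) (A : Set Γ) (n : ℕ) (y : Γ) :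
    P ({ω | x * salmW X 0 n ω = y} ∩ {ω | ∀ j, 1 ≤ j → x * salmW X 0 (n+j) ω ∉ A})
      = P {ω | salmW X 0 n ω = x⁻¹ * y}
        * P {ω | ∀ j, 1 ≤ j → y * salmW X 0 j ω ∉ A} := by
  have hset : {ω | x * salmW X 0 n ω = y} ∩ {ω | ∀ j, 1 ≤ j → x * salmW X 0 (n+j) ω ∉ A}
      = {ω | salmW X 0 n ω = x⁻¹ * y} ∩ {ω | ∀ j, 1 ≤ j → y * salmW X n j ω ∉ A} := by
    ext ω
    simp only [Set.mem_inter_iff, Set.mem_setOf_eq]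
    constructor
    · rintro ⟨h1, h2⟩
      refine ⟨eq_inv_mul_iff_mul_eq.2 h1, fun j h1j => ?_⟩
      have h3 := h2 j h1j
      rwa [salmW_add, ← mul_assoc, h1] at h3
    · rintro ⟨h1, h2⟩
      have hxw : x * salmW X 0 n ω = y := eq_inv_mul_iff_mul_eq.1 h1
      refine ⟨hxw, fun j h1j => ?_⟩
      rw [salmW_add, ← mul_assoc, hxw]
      exact h2 j h1j
  rw [hset, salm_factInf P μ X hmeas hiid hlaw n (x⁻¹*y) y A]

include hiid hlaw hmeas in
private lemma salm_sumLV (x : Γ) (A : Set Γ) :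
    ∑' (y : ↥A), ∑' (n : ℕ),
      P {ω | salmW X 0 n ω = x⁻¹ * (y : Γ)}
        * P {ω | ∀ j, 1 ≤ j → (y : Γ) * salmW X 0 j ω ∉ A} ≤ 1 := by
  classical
  set F : ↥A × ℕ → Set Ω := fun p =>
    {ω | x * salmW X 0 p.2 ω = (p.1 : Γ)}
      ∩ {ω | ∀ j, 1 ≤ j → x * salmW X 0 (p.2 + j) ω ∉ A} with hF
  have hdisj : Pairwise (Function.onFun Disjoint F) := by
    have key : ∀ p q : ↥A × ℕ, p.2 < q.2 → Disjoint (F p) (F q) := by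
      intro p q hlt
      refine Set.disjoint_left.mpr fun ω hp hq => ?_
      have h1 : x * salmW X 0 (p.2 + (q.2 - p.2)) ω ∉ A := hp.2 (q.2 - p.2) (by omega)
      rw [show p.2 + (q.2 - p.2) = q.2 by omega] at h1
      exact h1 (hq.1 ▸ q.1.2)
    intro p q hpq
    rcases Nat.lt_trichotomy p.2 q.2 with h | h | h
    · exact key p q h
    · refine Set.disjoint_left.mpr fun ω hp hq => hpq ?_
      have heq : (p.1 : Γ) = (q.1 : Γ) := hp.1.symm.trans (by rw [h]; exact hq.1)
      exact Prod.ext (Subtype.ext heq) h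
    · exact (key q p h).symm
  have hmeasF : ∀ p, MeasurableSet (F p) := fun p =>
    (salm_measWeq X hmeas x p.1 p.2).inter (salm_measFut X hmeas x A p.2)
  calc ∑' (y : ↥A), ∑' (n : ℕ),
        P {ω | salmW X 0 n ω = x⁻¹ * (y : Γ)}
          * P {ω | ∀ j, 1 ≤ j → (y : Γ) * salmW X 0 j ω ∉ A}
      = ∑' (p : ↥A × ℕ), P {ω | salmW X 0 p.2 ω = x⁻¹ * (p.1 : Γ)}
          * P {ω | ∀ j, 1 ≤ j → (p.1 : Γ) * salmW X 0 j ω ∉ A} := by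
        rw [ENNReal.tsum_prod (f := fun (y : ↥A) (n : ℕ) =>
          P {ω | salmW X 0 n ω = x⁻¹ * (y : Γ)}
            * P {ω | ∀ j, 1 ≤ j → (y : Γ) * salmW X 0 j ω ∉ A})]
    _ = ∑' (p : ↥A × ℕ), P (F p) := by
        refine tsum_congr fun p => ?_
        rw [hF]
        rw [salm_lastVisit P μ X hmeas hiid hlaw x A p.2 p.1]
    _ = P (⋃ p, F p) := (measure_iUnion hdisj hmeasF).symm
    _ ≤ 1 := prob_le_one

/-- the Green function `G(e, z)` of the walk -/
private def salmG (P : Measure Ω) (X : ℕ → Ω → Γ) (z : Γ) : ℝ≥0∞ :=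
  ∑' n : ℕ, P {ω | salmW X 0 n ω = z}

/-- probability of never returning to the starting point -/
private def salmR (P : Measure Ω) (X : ℕ → Ω → Γ) : ℝ≥0∞ :=
  P {ω | ∀ j, 1 ≤ j → salmW X 0 j ω ≠ 1}

include hiid hlaw hmeas in
private lemma salm_G_mul (z : Γ) : salmG P X z * salmR P X ≤ 1 := by
  have h := salm_sumLV P μ X hmeas hiid hlaw 1 {z}
  rw [tsum_singleton (α := ℝ≥0∞) z (fun y : Γ => ∑' (n : ℕ),
    P {ω | salmW X 0 n ω = 1⁻¹ * y}
      * P {ω | ∀ j, 1 ≤ j → y * salmW X 0 j ω ∉ ({z} : Set Γ)})] at h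
  have h2 : ∀ n : ℕ, {ω | salmW X 0 n ω = 1⁻¹ * z} = {ω | salmW X 0 n ω = z} := by
    intro n; simp
  have h3 : {ω | ∀ j, 1 ≤ j → z * salmW X 0 j ω ∉ ({z} : Set Γ)}
      = {ω | ∀ j, 1 ≤ j → salmW X 0 j ω ≠ 1} := by
    ext ω
    simp only [Set.mem_setOf_eq, Set.mem_singleton_iff]
    constructor
    · intro h4 j hj he
      exact h4 j hj (by rw [he, mul_one])
    · intro h4 j hj he
      exact h4 j hj (mul_eq_left.1 he)
  simp_rw [h2, h3] at h
  rw [ENNReal.tsum_mul_right] at h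
  exact h


include hmeas in
private lemma salm_R_ne_zero (htrans : P {ω | ∃ n ≥ 1, walk 1 X n ω = 1} < 1) :
    salmR P X ≠ 0 := by
  have hmeasE : MeasurableSet {ω | ∃ n ≥ 1, walk (1:Γ) X n ω = 1} := by
    have h : {ω | ∃ n ≥ 1, walk (1:Γ) X n ω = 1}
        = ⋃ (n : ℕ) (_ : 1 ≤ n), {ω | (1:Γ) * salmW X 0 n ω = 1} := by
      ext ω
      simp only [Set.mem_setOf_eq, Set.mem_iUnion, salm_walk_eq]
      tauto
    rw [h]
    exact MeasurableSet.iUnion fun n => MeasurableSet.iUnion fun _ =>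
      salm_measWeq X hmeas 1 1 n
  have hcompl : {ω | ∀ j, 1 ≤ j → salmW X 0 j ω ≠ 1}
      = {ω | ∃ n ≥ 1, walk (1:Γ) X n ω = 1}ᶜ := by
    ext ω
    simp only [Set.mem_setOf_eq, Set.mem_compl_iff, not_exists, salm_walk_eq, one_mul]
    constructor
    · intro h n
      intro hn
      exact absurd hn.2 (h n hn.1)
    · intro h j hj he
      exact h j ⟨hj, he⟩
  rw [salmR, hcompl, prob_compl_eq_one_sub hmeasE]
  intro h0
  rw [tsub_eq_zero_iff_le] at h0
  exact absurd htrans (not_lt.2 h0)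

include hiid hlaw hmeas in
private lemma salm_G_le (htrans : P {ω | ∃ n ≥ 1, walk 1 X n ω = 1} < 1) (z : Γ) :
    salmG P X z ≤ (salmR P X)⁻¹ :=
  ENNReal.le_inv_iff_mul_le.2 (salm_G_mul P μ X hmeas hiid hlaw z)

include hiid hlaw hmeas in
private lemma salm_G_ne_top (htrans : P {ω | ∃ n ≥ 1, walk 1 X n ω = 1} < 1) (z : Γ) :
    salmG P X z ≠ ∞ := by
  refine ne_top_of_le_ne_top ?_ (salm_G_le P μ X hmeas hiid hlaw htrans z)
  exact ENNReal.inv_ne_top.2 (salm_R_ne_zero P X hmeas htrans)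

include hiid hlaw hmeas in
private lemma salm_maxIneq_finset (hGfin : ∀ z : Γ, salmG P X z ≠ ∞)
    (x : Γ) (t : ℝ≥0∞) (A : Finset Γ)
    (hA : ∀ y ∈ A, t * salmG P X y ≤ salmG P X (x⁻¹ * y)) :
    t * P {ω | ∃ n, salmW X 0 n ω ∈ (A : Set Γ)} ≤ 1 := by
  classical
  set S : ℕ → Set Ω := fun n => {ω | salmW X 0 n ω ∈ (A : Set Γ)} with hS
  have hSdec : ∀ n, S n = ⋃ y ∈ A, {ω | salmW X 0 n ω = y} := by
    intro n; ext ω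
    simp only [hS, Set.mem_setOf_eq, Set.mem_iUnion, Finset.mem_coe]
    constructor
    · intro h; exact ⟨salmW X 0 n ω, h, rfl⟩
    · rintro ⟨y, hy, h⟩; rw [h]; exact hy
  have hmeasWz : ∀ (n : ℕ) (y : Γ), MeasurableSet {ω | salmW X 0 n ω = y} := by
    intro n y
    have := salm_measWeq X hmeas (1:Γ) y n
    simpa [one_mul] using this
  have hmeasS : ∀ n, MeasurableSet (S n) := by
    intro n; rw [hSdec]
    exact MeasurableSet.biUnion (Finset.countable_toSet A) fun y _ => hmeasWz n y
  have hsum : ∑' n, P (S n) ≠ ∞ := by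
    have h1 : ∀ n, P (S n) = ∑ y ∈ A, P {ω | salmW X 0 n ω = y} := by
      intro n
      rw [hSdec]
      exact measure_biUnion_finset
        (fun y _ z _ hyz => Set.disjoint_left.mpr fun ω h1 h2 => hyz (h1.symm.trans h2))
        (fun y _ => hmeasWz n y)
    have h2 : ∑' n, P (S n) = ∑ y ∈ A, salmG P X y := by
      calc ∑' n, P (S n) = ∑' n, ∑ y ∈ A, P {ω | salmW X 0 n ω = y} := tsum_congr h1
        _ = ∑ y ∈ A, salmG P X y := Summable.tsum_finsetSum (fun y _ => ENNReal.summable)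
    rw [h2]
    exact (ENNReal.sum_lt_top.2 fun y _ => lt_top_iff_ne_top.2 (hGfin y)).ne
  have hBC : P (limsup S atTop) = 0 := measure_limsup_atTop_eq_zero hsum
  set F : ↥(A : Set Γ) × ℕ → Set Ω := fun p =>
    {ω | (1:Γ) * salmW X 0 p.2 ω = (p.1 : Γ)}
      ∩ {ω | ∀ j, 1 ≤ j → (1:Γ) * salmW X 0 (p.2 + j) ω ∉ (A : Set Γ)} with hF
  have hcover : {ω | ∃ n, salmW X 0 n ω ∈ (A : Set Γ)} ⊆ limsup S atTop ∪ ⋃ p, F p := by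
    intro ω hω
    by_cases hlim : ω ∈ limsup S atTop
    · exact Or.inl hlim
    · right
      rw [mem_limsup_iff_frequently_mem, Filter.not_frequently] at hlim
      obtain ⟨N, hN⟩ := Filter.eventually_atTop.1 hlim
      obtain ⟨n0, hn0⟩ := hω
      have hn0N : n0 ≤ N := by
        by_contra hc
        exact hN n0 (by omega) hn0
      have hpm : salmW X 0 (Nat.findGreatest (fun n => salmW X 0 n ω ∈ (A : Set Γ)) N) ω
          ∈ (A : Set Γ) := by
        simpa using Nat.findGreatest_spec (P := fun n => salmW X 0 n ω ∈ (A : Set Γ)) hn0N hn0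
      refine Set.mem_iUnion.2
        ⟨(⟨_, hpm⟩, Nat.findGreatest (fun n => salmW X 0 n ω ∈ (A : Set Γ)) N), ?_, ?_⟩
      · exact one_mul _
      · intro j hj
        rw [one_mul]
        intro hmem
        rcases le_or_gt (Nat.findGreatest (fun n => salmW X 0 n ω ∈ (A : Set Γ)) N + j) N
          with h | h
        · exact Nat.findGreatest_is_greatest (P := fun n => salmW X 0 n ω ∈ (A : Set Γ)) (by omega) h hmem
        · exact hN _ (by omega) hmem
  have hchain : P {ω | ∃ n, salmW X 0 n ω ∈ (A : Set Γ)}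
      ≤ ∑' (p : ↥(A : Set Γ) × ℕ), P (F p) := by
    calc P {ω | ∃ n, salmW X 0 n ω ∈ (A : Set Γ)}
        ≤ P (limsup S atTop ∪ ⋃ p, F p) := measure_mono hcover
      _ ≤ P (limsup S atTop) + P (⋃ p, F p) := measure_union_le _ _
      _ = P (⋃ p, F p) := by rw [hBC, zero_add]
      _ ≤ ∑' p, P (F p) := measure_iUnion_le _
  have hFval : ∀ p : ↥(A : Set Γ) × ℕ, P (F p)
      = P {ω | salmW X 0 p.2 ω = (p.1 : Γ)}
        * P {ω | ∀ j, 1 ≤ j → (p.1 : Γ) * salmW X 0 j ω ∉ (A : Set Γ)} := by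
    intro p
    rw [hF]
    rw [salm_lastVisit P μ X hmeas hiid hlaw 1 (A : Set Γ) p.2 p.1]
    simp
  calc t * P {ω | ∃ n, salmW X 0 n ω ∈ (A : Set Γ)}
      ≤ t * ∑' (p : ↥(A : Set Γ) × ℕ), P (F p) := mul_le_mul_right hchain t
    _ = t * ∑' (y : ↥(A : Set Γ)), salmG P X (y : Γ)
          * P {ω | ∀ j, 1 ≤ j → (y : Γ) * salmW X 0 j ω ∉ (A : Set Γ)} := by
        congr 1
        rw [tsum_congr hFval]
        rw [ENNReal.tsum_prod (f := fun (y : ↥(A : Set Γ)) (n : ℕ) =>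
          P {ω | salmW X 0 n ω = (y : Γ)}
            * P {ω | ∀ j, 1 ≤ j → (y : Γ) * salmW X 0 j ω ∉ (A : Set Γ)})]
        exact tsum_congr fun y => ENNReal.tsum_mul_right
    _ = ∑' (y : ↥(A : Set Γ)), (t * salmG P X (y : Γ))
          * P {ω | ∀ j, 1 ≤ j → (y : Γ) * salmW X 0 j ω ∉ (A : Set Γ)} := by
        rw [← ENNReal.tsum_mul_left]
        exact tsum_congr fun y => by rw [mul_assoc]
    _ ≤ ∑' (y : ↥(A : Set Γ)), salmG P X (x⁻¹ * (y : Γ))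
          * P {ω | ∀ j, 1 ≤ j → (y : Γ) * salmW X 0 j ω ∉ (A : Set Γ)} :=
        ENNReal.tsum_le_tsum fun y => mul_le_mul_left (hA (y : Γ) (Finset.mem_coe.1 y.2)) _
    _ = ∑' (y : ↥(A : Set Γ)), ∑' (n : ℕ), P {ω | salmW X 0 n ω = x⁻¹ * (y : Γ)}
          * P {ω | ∀ j, 1 ≤ j → (y : Γ) * salmW X 0 j ω ∉ (A : Set Γ)} :=
        tsum_congr fun y => ENNReal.tsum_mul_right.symm
    _ ≤ 1 := salm_sumLV P μ X hmeas hiid hlaw x (A : Set Γ)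

include hiid hlaw hmeas in
private lemma salm_maxIneq (hGfin : ∀ z : Γ, salmG P X z ≠ ∞)
    (x : Γ) (t : ℝ≥0∞) (A : Set Γ)
    (hA : ∀ y ∈ A, t * salmG P X y ≤ salmG P X (x⁻¹ * y)) :
    t * P {ω | ∃ n, salmW X 0 n ω ∈ A} ≤ 1 := by
  classical
  rcases A.eq_empty_or_nonempty with rfl | hne
  · have : {ω | ∃ n, salmW X 0 n ω ∈ (∅ : Set Γ)} = ∅ := by
      ext ω; simp
    rw [this, measure_empty, mul_zero]
    exact zero_le_one
  obtain ⟨f, hf⟩ := (Set.to_countable A).exists_eq_range hne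
  set E : ℕ → Set Ω := fun k => {ω | ∃ n, salmW X 0 n ω ∈ ((Finset.range k).image f : Set Γ)}
    with hE
  have hmono : Monotone E := by
    intro k l hkl ω
    rintro ⟨n, hn⟩
    refine ⟨n, ?_⟩
    simp only [Finset.coe_image, Finset.coe_range, Set.mem_image] at hn ⊢
    obtain ⟨i, hi, hie⟩ := hn
    exact ⟨i, by simp only [Set.mem_Iio] at hi ⊢; omega, hie⟩
  have hunion : {ω | ∃ n, salmW X 0 n ω ∈ A} = ⋃ k, E k := by
    ext ω
    simp only [Set.mem_setOf_eq, Set.mem_iUnion, hE]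
    constructor
    · rintro ⟨n, hn⟩
      rw [hf] at hn
      obtain ⟨i, hi⟩ := hn
      exact ⟨i + 1, n, by
        simp only [Finset.coe_image, Finset.coe_range, Set.mem_image]
        exact ⟨i, by simp, hi⟩⟩
    · rintro ⟨k, n, hn⟩
      refine ⟨n, ?_⟩
      simp only [Finset.coe_image, Finset.coe_range, Set.mem_image] at hn
      obtain ⟨i, _, hie⟩ := hn
      rw [hf]
      exact ⟨i, hie⟩
  rw [hunion, hmono.directed_le.measure_iUnion, ENNReal.mul_iSup]
  refine iSup_le fun k => ?_
  refine salm_maxIneq_finset P μ X hmeas hiid hlaw hGfin x t ((Finset.range k).image f) ?_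
  intro y hy
  refine hA y ?_
  simp only [Finset.mem_image, Finset.mem_range] at hy
  obtain ⟨i, _, hie⟩ := hy
  rw [hf]
  exact ⟨i, hie⟩

private lemma salm_greenFn_eq (x y : Γ) : greenFn P X x y = salmG P X (x⁻¹ * y) := by
  unfold greenFn salmG
  refine tsum_congr fun n => ?_
  congr 1
  ext ω
  simp only [Set.mem_setOf_eq, salm_walk_eq]
  exact ⟨fun h => eq_inv_mul_iff_mul_eq.2 h, fun h => eq_inv_mul_iff_mul_eq.1 h⟩

private lemma salm_martinK_eq (x y : Γ) :
    martinK P X x y = (salmG P X (x⁻¹ * y)).toReal / (salmG P X y).toReal := by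
  rw [martinK, salm_greenFn_eq, salm_greenFn_eq, inv_one, one_mul]

include hiid hlaw hmeas in
private lemma salm_G_step (g z : Γ) : μ {g} * salmG P X z ≤ salmG P X (g * z) := by
  have hstep : ∀ m : ℕ, μ {g} * P {ω | salmW X 0 m ω = z}
      ≤ P {ω | salmW X 0 (1 + m) ω = g * z} := by
    intro m
    have hsub : {ω | salmLv (fun k => X k ω) 0 1 ∈ ({[g]} : Set (List Γ))}
        ∩ {ω | salmLv (fun k => X k ω) 1 m ∈ (List.prod ⁻¹' {z})}
        ⊆ {ω | salmW X 0 (1 + m) ω = g * z} := by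
      rintro ω ⟨h1, h2⟩
      have h1' : salmLv (fun k => X k ω) 0 1 = [g] := h1
      have h2' : (salmLv (fun k => X k ω) 1 m).prod = z := h2
      show salmW X 0 (1 + m) ω = g * z
      rw [salmW_add, salmW, h1']
      simp only [List.prod_cons, List.prod_nil, mul_one]
      rw [show salmW X 1 m ω = (salmLv (fun k => X k ω) 1 m).prod from rfl, h2']
    have hinter := salm_probInter P μ X hmeas hiid hlaw 1 m ({[g]} : Set (List Γ))
      (List.prod ⁻¹' {z})
    have hfirst : P {ω | salmLv (fun k => X k ω) 0 1 ∈ ({[g]} : Set (List Γ))} = μ {g} := by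
      have hseteq : {ω | salmLv (fun k => X k ω) 0 1 ∈ ({[g]} : Set (List Γ))}
          = X 0 ⁻¹' {g} := by
        ext ω
        simp [salmLv, List.range_succ]
      rw [hseteq, ← hlaw 0, Measure.map_apply (hmeas 0) (measurableSet_singleton _)]
    have hsecond : P {ω | salmLv (fun k => X k ω) 0 m ∈ (List.prod ⁻¹' {z})}
        = P {ω | salmW X 0 m ω = z} := rfl
    calc μ {g} * P {ω | salmW X 0 m ω = z}
        = P ({ω | salmLv (fun k => X k ω) 0 1 ∈ ({[g]} : Set (List Γ))}
            ∩ {ω | salmLv (fun k => X k ω) 1 m ∈ (List.prod ⁻¹' {z})}) := by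
          rw [hinter, hfirst, hsecond]
      _ ≤ P {ω | salmW X 0 (1 + m) ω = g * z} := measure_mono hsub
  calc μ {g} * salmG P X z = ∑' m : ℕ, μ {g} * P {ω | salmW X 0 m ω = z} := by
        rw [salmG, ENNReal.tsum_mul_left]
    _ ≤ ∑' m : ℕ, P {ω | salmW X 0 (1 + m) ω = g * z} := ENNReal.tsum_le_tsum hstep
    _ ≤ salmG P X (g * z) := by
        rw [salmG]
        exact ENNReal.tsum_comp_le_tsum_of_injective (fun a b h => by omega)
          (fun m => P {ω | salmW X 0 m ω = g * z})

include hiid hlaw hmeas in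
private lemma salm_Kmax (htrans : P {ω | ∃ n ≥ 1, walk 1 X n ω = 1} < 1)
    (x : Γ) (r : ℝ) (hr : 0 < r) :
    P {ω | ∃ n, r ≤ martinK P X x (walk 1 X n ω)} ≤ (ENNReal.ofReal r)⁻¹ := by
  set A : Set Γ :=
    {y | ENNReal.ofReal r * salmG P X y ≤ salmG P X (x⁻¹ * y) ∧ salmG P X y ≠ 0} with hA
  have hsub : {ω | ∃ n, r ≤ martinK P X x (walk 1 X n ω)}
      ⊆ {ω | ∃ n, salmW X 0 n ω ∈ A} := by
    rintro ω ⟨n, hn⟩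
    refine ⟨n, ?_⟩
    rw [salm_walk_eq, one_mul] at hn
    set y := salmW X 0 n ω with hy
    rw [salm_martinK_eq] at hn
    have hbtop : salmG P X y ≠ ∞ := salm_G_ne_top P μ X hmeas hiid hlaw htrans y
    have hatop : salmG P X (x⁻¹ * y) ≠ ∞ := salm_G_ne_top P μ X hmeas hiid hlaw htrans _
    have hb0 : salmG P X y ≠ 0 := by
      intro h0
      rw [h0] at hn
      simp only [ENNReal.toReal_zero, div_zero] at hn
      exact absurd hn (not_le.2 hr)
    have hbpos : 0 < (salmG P X y).toReal := ENNReal.toReal_pos hb0 hbtop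
    have hmul : r * (salmG P X y).toReal ≤ (salmG P X (x⁻¹ * y)).toReal := by
      rw [le_div_iff₀ hbpos] at hn
      exact hn
    refine ⟨?_, hb0⟩
    calc ENNReal.ofReal r * salmG P X y
        = ENNReal.ofReal (r * (salmG P X y).toReal) := by
          rw [ENNReal.ofReal_mul hr.le, ENNReal.ofReal_toReal hbtop]
      _ ≤ ENNReal.ofReal ((salmG P X (x⁻¹ * y)).toReal) := ENNReal.ofReal_le_ofReal hmul
      _ = salmG P X (x⁻¹ * y) := ENNReal.ofReal_toReal hatop
  have hmax := salm_maxIneq P μ X hmeas hiid hlaw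
    (salm_G_ne_top P μ X hmeas hiid hlaw htrans) x (ENNReal.ofReal r) A
    (fun y hy => hy.1)
  calc P {ω | ∃ n, r ≤ martinK P X x (walk 1 X n ω)}
      ≤ P {ω | ∃ n, salmW X 0 n ω ∈ A} := measure_mono hsub
    _ ≤ (ENNReal.ofReal r)⁻¹ := by
        rw [ENNReal.le_inv_iff_mul_le, mul_comm]
        exact hmax

private lemma salm_meas_comp2 {α β γ' δ : Type*} [MeasurableSpace α] [MeasurableSpace δ]
    [Countable β] [MeasurableSpace β] [MeasurableSingletonClass β]
    [Countable γ'] [MeasurableSpace γ'] [MeasurableSingletonClass γ']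
    (φ : β → γ' → δ) {f : α → β} {g : α → γ'} (hf : Measurable f) (hg : Measurable g) :
    Measurable fun a => φ (f a) (g a) := by
  intro s _
  have h : (fun a => φ (f a) (g a)) ⁻¹' s
      = ⋃ (p : ↥{q : β × γ' | φ q.1 q.2 ∈ s}),
          (f ⁻¹' {(p : β × γ').1} ∩ g ⁻¹' {(p : β × γ').2}) := by
    ext a
    simp only [Set.mem_preimage, Set.mem_iUnion, Subtype.exists, Set.mem_inter_iff,
      Set.mem_singleton_iff, Prod.exists, Set.mem_setOf_eq]
    constructor
    · intro ha; exact ⟨f a, g a, ha, rfl, rfl⟩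
    · rintro ⟨b, c, hbc, rfl, rfl⟩; exact hbc
  rw [h]
  exact MeasurableSet.iUnion fun p =>
    (hf (measurableSet_singleton _)).inter (hg (measurableSet_singleton _))

include hiid hlaw hmeas in
private lemma salm_KmaxY (htrans : P {ω | ∃ n ≥ 1, walk 1 X n ω = 1} < 1)
    (Y : Ω → Γ) (hYmeas : Measurable Y)
    (hYindep : IndepFun Y (fun ω k => X k ω) P)
    (r : ℝ) (hr : 0 < r) :
    P {ω | ∃ n, r ≤ martinK P X (Y ω) (walk 1 X n ω)} ≤ (ENNReal.ofReal r)⁻¹ := by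
  classical
  set S : Γ → Set (ℕ → Γ) := fun x =>
    {u | ∃ n, r ≤ martinK P X x (salmW (fun k (v : ℕ → Γ) => v k) 0 n u)} with hS
  have hSmeas : ∀ x, MeasurableSet (S x) := by
    intro x
    have h : S x = ⋃ n, (salmW (fun k (v : ℕ → Γ) => v k) 0 n) ⁻¹'
        {z | r ≤ martinK P X x z} := by
      ext u; simp [hS]
    rw [h]
    exact MeasurableSet.iUnion fun n =>
      (salm_measW (fun k (v : ℕ → Γ) => v k) (fun k => measurable_pi_apply k) 0 n)
        (salm_measSet _)
  have hkey : ∀ x : Γ, (fun ω k => X k ω) ⁻¹' (S x)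
      = {ω | ∃ n, r ≤ martinK P X x (walk 1 X n ω)} := by
    intro x
    ext ω
    simp only [Set.mem_preimage, hS, Set.mem_setOf_eq, salm_walk_eq, one_mul]
    rfl
  have hcover : {ω | ∃ n, r ≤ martinK P X (Y ω) (walk 1 X n ω)}
      = ⋃ x : Γ, (Y ⁻¹' {x} ∩ (fun ω k => X k ω) ⁻¹' (S x)) := by
    ext ω
    simp only [Set.mem_setOf_eq, Set.mem_iUnion, Set.mem_inter_iff, Set.mem_preimage,
      Set.mem_singleton_iff]
    constructor
    · intro hmem
      refine ⟨Y ω, rfl, ?_⟩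
      have := (Set.ext_iff.1 (hkey (Y ω)) ω).2 hmem
      exact this
    · rintro ⟨x, rfl, hmem⟩
      exact (Set.ext_iff.1 (hkey (Y ω)) ω).1 hmem
  have hid := indepFun_iff_measure_inter_preimage_eq_mul.1 hYindep
  have hsumY : ∑' x : Γ, P (Y ⁻¹' {x}) = 1 := by
    have h1 : (⋃ x : Γ, Y ⁻¹' {x}) = Set.univ := by
      ext ω; simp
    rw [← measure_iUnion (fun x x' hxx' => Set.disjoint_left.mpr fun ω hω hω' =>
        hxx' (by
          have e1 : Y ω = x := hω
          have e2 : Y ω = x' := hω'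
          rw [← e1, ← e2]))
      (fun x => hYmeas (measurableSet_singleton x)), h1, measure_univ]
  calc P {ω | ∃ n, r ≤ martinK P X (Y ω) (walk 1 X n ω)}
      = P (⋃ x : Γ, (Y ⁻¹' {x} ∩ (fun ω k => X k ω) ⁻¹' (S x))) := by rw [hcover]
    _ ≤ ∑' x : Γ, P (Y ⁻¹' {x} ∩ (fun ω k => X k ω) ⁻¹' (S x)) := measure_iUnion_le _
    _ = ∑' x : Γ, P (Y ⁻¹' {x}) * P ((fun ω k => X k ω) ⁻¹' (S x)) :=
        tsum_congr fun x => hid {x} (S x) (measurableSet_singleton x) (hSmeas x)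
    _ ≤ ∑' x : Γ, P (Y ⁻¹' {x}) * (ENNReal.ofReal r)⁻¹ := by
        refine ENNReal.tsum_le_tsum fun x => mul_le_mul_right ?_ _
        rw [hkey x]
        exact salm_Kmax P μ X hmeas hiid hlaw htrans x r hr
    _ = (∑' x : Γ, P (Y ⁻¹' {x})) * (ENNReal.ofReal r)⁻¹ := ENNReal.tsum_mul_right
    _ = (ENNReal.ofReal r)⁻¹ := by rw [hsumY, one_mul]

end AuxSALM


/-- the random variable `sup_n |ln K(X̃₁, Z_n)|` is integrable,
where `X̃₁ = Y` has the reversed law `μ̃` and is independent of the walk. -/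
theorem sup_abs_log_martin_kernel_integrable
    [Group Γ] [Countable Γ] [MeasurableSpace Γ] [MeasurableSingletonClass Γ]
    [MeasurableSpace Ω] (P : Measure Ω) [IsProbabilityMeasure P]
    (μ : Measure Γ) [IsProbabilityMeasure μ]
    (X : ℕ → Ω → Γ) (hmeas : ∀ k, Measurable (X k))
    (hiid : iIndepFun (m := fun _ => ‹MeasurableSpace Γ›) X P)
    (hlaw : ∀ k, Measure.map (X k) P = μ)
    (hgen : Subgroup.closure {g : Γ | μ {g} ≠ 0} = ⊤)
    (htrans : P {ω | ∃ n ≥ 1, walk 1 X n ω = 1} < 1)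
    (hent : Summable fun g : Γ => Real.negMulLog (μ {g}).toReal)
    (Y : Ω → Γ) (hYmeas : Measurable Y)
    (hYlaw : Measure.map Y P = Measure.map (fun g : Γ => g⁻¹) μ)
    (hYindep : IndepFun Y (fun ω k => X k ω) P) :
    (∀ᵐ ω ∂P, BddAbove (Set.range fun n : ℕ =>
        |Real.log (martinK P X (Y ω) (walk 1 X n ω))|)) ∧
    Integrable (fun ω => ⨆ n : ℕ,
        |Real.log (martinK P X (Y ω) (walk 1 X n ω))|) P := by
  classical
  have hGfin : ∀ z : Γ, salmG P X z ≠ ∞ := salm_G_ne_top P μ X hmeas hiid hlaw htrans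
  set D : Ω → ℝ := fun ω => - Real.log (μ {(Y ω)⁻¹}).toReal with hD
  set h : ℕ → Ω → ℝ := fun n ω => |Real.log (martinK P X (Y ω) (walk 1 X n ω))| with hh
  set f : Ω → ℝ := fun ω => ⨆ n : ℕ, h n ω with hf
  have htole : ∀ ν : Measure Γ, IsProbabilityMeasure ν → ∀ s : Set Γ, (ν s).toReal ≤ 1 := by
    intro ν hν s
    have h1 : (ν s).toReal ≤ (1 : ℝ≥0∞).toReal :=
      ENNReal.toReal_mono (by simp) prob_le_one
    simpa using h1
  have hInvMeas : Measurable (fun g : Γ => g⁻¹) := fun s _ => salm_measSet _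
  have hDnn : ∀ ω, 0 ≤ D ω := by
    intro ω
    simp only [hD, neg_nonneg]
    exact Real.log_nonpos ENNReal.toReal_nonneg (htole μ ‹_› _)
  -- a.e. facts
  have hYae : ∀ᵐ ω ∂P, μ {(Y ω)⁻¹} ≠ 0 := by
    rw [ae_iff]
    have hset : {ω | ¬ μ {(Y ω)⁻¹} ≠ 0} = Y ⁻¹' {x | μ {x⁻¹} = 0} := by
      ext ω; simp
    rw [hset, ← Measure.map_apply hYmeas (salm_measSet _), hYlaw,
      Measure.map_apply hInvMeas (salm_measSet _)]
    have hset2 : (fun g : Γ => g⁻¹) ⁻¹' {x | μ {x⁻¹} = 0} = {x | μ {x} = 0} := by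
      ext g; simp
    rw [hset2]
    have hset3 : {x : Γ | μ {x} = 0} = ⋃ x ∈ {x : Γ | μ {x} = 0}, {x} := by
      ext x; simp
    rw [hset3]
    exact (measure_biUnion_null_iff (Set.to_countable _)).2 fun x hx => hx
  have hZae : ∀ᵐ ω ∂P, ∀ n : ℕ, P {ω' | salmW X 0 n ω' = salmW X 0 n ω} ≠ 0 := by
    rw [ae_all_iff]
    intro n
    rw [ae_iff]
    have hset : {ω | ¬ P {ω' | salmW X 0 n ω' = salmW X 0 n ω} ≠ 0}
        = ⋃ (z : ↥{z : Γ | P {ω' | salmW X 0 n ω' = z} = 0}), salmW X 0 n ⁻¹' {(z : Γ)} := by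
      ext ω
      simp only [Set.mem_setOf_eq, not_not, Set.mem_iUnion, Set.mem_preimage,
        Set.mem_singleton_iff, Subtype.exists, exists_prop]
      constructor
      · intro h0; exact ⟨salmW X 0 n ω, h0, rfl⟩
      · rintro ⟨z, hz, hzz⟩
        rw [hzz]; exact hz
    rw [hset]
    exact measure_iUnion_null fun z => z.2
  have hMae : ∀ᵐ ω ∂P, ∃ m : ℕ, ∀ n : ℕ,
      martinK P X (Y ω) (walk 1 X n ω) < (m : ℝ) + 1 := by
    rw [ae_iff]
    have hsub : {ω | ¬ ∃ m : ℕ, ∀ n, martinK P X (Y ω) (walk 1 X n ω) < (m:ℝ)+1}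
        ⊆ ⋂ m : ℕ, {ω | ∃ n, ((m:ℝ)+1) ≤ martinK P X (Y ω) (walk 1 X n ω)} := by
      intro ω hω
      simp only [Set.mem_setOf_eq, not_exists, not_forall, not_lt] at hω
      simp only [Set.mem_iInter, Set.mem_setOf_eq]
      intro m
      exact hω m
    refine le_antisymm (le_trans (measure_mono hsub) ?_) zero_le
    have hb : ∀ m : ℕ, P (⋂ m' : ℕ, {ω | ∃ n, ((m':ℝ)+1) ≤ martinK P X (Y ω) (walk 1 X n ω)})
        ≤ ((m : ℝ≥0∞) + 1)⁻¹ := by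
      intro m
      refine le_trans (measure_mono (Set.iInter_subset _ m)) ?_
      refine le_trans
        (salm_KmaxY P μ X hmeas hiid hlaw htrans Y hYmeas hYindep ((m:ℝ)+1) (by positivity)) ?_
      rw [show ENNReal.ofReal ((m:ℝ)+1) = (m : ℝ≥0∞) + 1 by
        rw [ENNReal.ofReal_add (by positivity) zero_le_one]
        simp]
    have hlim : Tendsto (fun m : ℕ => ((m : ℝ≥0∞) + 1)⁻¹) atTop (nhds 0) := by
      have h2 := ENNReal.tendsto_inv_nat_nhds_zero.comp (Filter.tendsto_add_atTop_nat 1)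
      exact h2.congr fun m => by
        simp only [Function.comp_apply, Nat.cast_add, Nat.cast_one]
    exact ge_of_tendsto' hlim hb
  have hKlow : ∀ ω, μ {(Y ω)⁻¹} ≠ 0 →
      (∀ n, P {ω' | salmW X 0 n ω' = salmW X 0 n ω} ≠ 0) →
      ∀ n : ℕ, (μ {(Y ω)⁻¹}).toReal ≤ martinK P X (Y ω) (walk 1 X n ω) := by
    intro ω h1 h2 n
    have hGz : salmG P X (salmW X 0 n ω) ≠ 0 := by
      intro h0
      refine h2 n (le_antisymm ?_ zero_le)
      rw [← h0]
      exact ENNReal.le_tsum n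
    have hy : walk 1 X n ω = salmW X 0 n ω := by rw [salm_walk_eq, one_mul]
    rw [hy, salm_martinK_eq]
    have hbpos : 0 < (salmG P X (salmW X 0 n ω)).toReal := ENNReal.toReal_pos hGz (hGfin _)
    rw [le_div_iff₀ hbpos]
    calc (μ {(Y ω)⁻¹}).toReal * (salmG P X (salmW X 0 n ω)).toReal
        = ((μ {(Y ω)⁻¹}) * salmG P X (salmW X 0 n ω)).toReal := (ENNReal.toReal_mul).symm
      _ ≤ (salmG P X ((Y ω)⁻¹ * salmW X 0 n ω)).toReal :=
          ENNReal.toReal_mono (hGfin _) (salm_G_step P μ X hmeas hiid hlaw _ _)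
  have hGOOD : ∀ᵐ ω ∂P, (∀ n : ℕ, 0 < martinK P X (Y ω) (walk 1 X n ω)
        ∧ - Real.log (martinK P X (Y ω) (walk 1 X n ω)) ≤ D ω)
      ∧ BddAbove (Set.range fun n : ℕ => h n ω) := by
    filter_upwards [hYae, hZae, hMae] with ω h1 h2 h3
    have hppos : 0 < (μ {(Y ω)⁻¹}).toReal := ENNReal.toReal_pos h1 (measure_ne_top μ _)
    have hK := hKlow ω h1 h2
    have hmain : ∀ n : ℕ, 0 < martinK P X (Y ω) (walk 1 X n ω)
        ∧ - Real.log (martinK P X (Y ω) (walk 1 X n ω)) ≤ D ω := by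
      intro n
      have hKpos : 0 < martinK P X (Y ω) (walk 1 X n ω) := lt_of_lt_of_le hppos (hK n)
      refine ⟨hKpos, ?_⟩
      have hlog := Real.log_le_log hppos (hK n)
      simp only [hD]
      linarith
    refine ⟨hmain, ?_⟩
    obtain ⟨m, hm⟩ := h3
    refine ⟨max (Real.log ((m:ℝ)+1)) (D ω), ?_⟩
    rintro r ⟨n, rfl⟩
    simp only [hh]
    refine abs_le.2 ⟨?_, ?_⟩
    · have h4 := (hmain n).2
      have h5 : -(D ω) ≤ Real.log (martinK P X (Y ω) (walk 1 X n ω)) := by linarith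
      refine le_trans ?_ h5
      exact neg_le_neg (le_max_right _ _)
    · refine le_trans ?_ (le_max_left _ _)
      exact Real.log_le_log (hmain n).1 (le_of_lt (hm n))
  -- measurability
  have hwalkmeas : ∀ n : ℕ, Measurable (walk (1:Γ) X n) := by
    intro n
    have hfun : walk (1:Γ) X n = fun ω => (1:Γ) * salmW X 0 n ω :=
      funext fun ω => salm_walk_eq 1 X n ω
    rw [hfun]
    exact salm_meas_comp2 (fun a b => a * b) measurable_const (salm_measW X hmeas 0 n)
  have hhmeas : ∀ n, Measurable (h n) := fun n =>
    salm_meas_comp2 (fun x z => |Real.log (martinK P X x z)|) hYmeas (hwalkmeas n)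
  set FF : ℕ → Ω → ℝ := fun N => Nat.rec (h 0) (fun N ih ω => max (ih ω) (h (N+1) ω)) N
    with hFF
  have hFFmeas : ∀ N, Measurable (FF N) := by
    intro N
    induction N with
    | zero => exact hhmeas 0
    | succ N ih => exact Measurable.max ih (hhmeas (N+1))
  have hFF_le_f : ∀ ω, BddAbove (Set.range fun n => h n ω) → ∀ N, FF N ω ≤ f ω := by
    intro ω hb N
    induction N with
    | zero => exact le_ciSup hb 0
    | succ N ih => exact max_le ih (le_ciSup hb (N+1))
  have h_le_FF : ∀ (n : ℕ) (ω : Ω), h n ω ≤ FF n ω := by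
    intro n ω
    induction n with
    | zero => exact le_refl _
    | succ n ih => exact le_max_right _ _
  have hFFmono : ∀ ω, Monotone fun N => FF N ω := by
    intro ω
    exact monotone_nat_of_le_succ fun N => le_max_left _ _
  have htendsto : ∀ᵐ ω ∂P, Tendsto (fun N => FF N ω) atTop (nhds (f ω)) := by
    filter_upwards [hGOOD] with ω hω
    have hb := hω.2
    have hbFF : BddAbove (Set.range fun N => FF N ω) := by
      refine ⟨f ω, ?_⟩
      rintro r ⟨N, rfl⟩
      exact hFF_le_f ω hb N
    have hlim := tendsto_atTop_ciSup (hFFmono ω) hbFF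
    have heq : ⨆ N, FF N ω = f ω := by
      refine le_antisymm (ciSup_le fun N => hFF_le_f ω hb N) ?_
      exact ciSup_le fun n => le_trans (h_le_FF n ω) (le_ciSup hbFF n)
    rwa [heq] at hlim
  have hfaemeas : AEMeasurable f P :=
    aemeasurable_of_tendsto_metrizable_ae atTop (fun N => (hFFmeas N).aemeasurable) htendsto
  have hfnn : ∀ ω, 0 ≤ f ω := by
    intro ω
    by_cases hb : BddAbove (Set.range fun n => h n ω)
    · refine le_trans ?_ (le_ciSup hb 0)
      simp only [hh]
      exact abs_nonneg _
    · simp only [hf]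
      rw [Real.iSup_of_not_bddAbove hb]
  -- tail bound
  have htail : ∀ t : ℝ, 0 < t →
      P {ω | t < f ω} ≤ P {ω | t < D ω} + ENNReal.ofReal (Real.exp (-t)) := by
    intro t ht
    have hN : P {ω | ¬ ((∀ n : ℕ, 0 < martinK P X (Y ω) (walk 1 X n ω)
        ∧ - Real.log (martinK P X (Y ω) (walk 1 X n ω)) ≤ D ω)
        ∧ BddAbove (Set.range fun n : ℕ => h n ω))} = 0 := by
      rw [← ae_iff]
      exact hGOOD
    have hsub : {ω | t < f ω} ⊆ {ω | ¬ ((∀ n : ℕ, 0 < martinK P X (Y ω) (walk 1 X n ω)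
          ∧ - Real.log (martinK P X (Y ω) (walk 1 X n ω)) ≤ D ω)
          ∧ BddAbove (Set.range fun n : ℕ => h n ω))}
        ∪ ({ω | t < D ω}
          ∪ {ω | ∃ n, Real.exp t ≤ martinK P X (Y ω) (walk 1 X n ω)}) := by
      intro ω hω
      by_cases hg : (∀ n : ℕ, 0 < martinK P X (Y ω) (walk 1 X n ω)
          ∧ - Real.log (martinK P X (Y ω) (walk 1 X n ω)) ≤ D ω)
          ∧ BddAbove (Set.range fun n : ℕ => h n ω)
      · right
        have hlt : t < ⨆ n, h n ω := hω
        obtain ⟨n, hn⟩ := (lt_ciSup_iff hg.2).1 hlt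
        rcases lt_abs.1 hn with hcase | hcase
        · right
          refine ⟨n, ?_⟩
          have hKpos := (hg.1 n).1
          have : Real.exp t < Real.exp (Real.log (martinK P X (Y ω) (walk 1 X n ω))) :=
            Real.exp_lt_exp.2 hcase
          rw [Real.exp_log hKpos] at this
          exact this.le
        · left
          exact lt_of_lt_of_le hcase (hg.1 n).2
      · exact Or.inl hg
    calc P {ω | t < f ω}
        ≤ P ({ω | ¬ _} ∪ ({ω | t < D ω}
            ∪ {ω | ∃ n, Real.exp t ≤ martinK P X (Y ω) (walk 1 X n ω)})) :=
          measure_mono hsub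
      _ ≤ P {ω | ¬ _} + P ({ω | t < D ω}
            ∪ {ω | ∃ n, Real.exp t ≤ martinK P X (Y ω) (walk 1 X n ω)}) :=
          measure_union_le _ _
      _ ≤ 0 + (P {ω | t < D ω}
            + P {ω | ∃ n, Real.exp t ≤ martinK P X (Y ω) (walk 1 X n ω)}) :=
          add_le_add (le_of_eq hN) (measure_union_le _ _)
      _ ≤ P {ω | t < D ω} + ENNReal.ofReal (Real.exp (-t)) := by
          rw [zero_add]
          refine add_le_add le_rfl ?_
          refine le_trans (salm_KmaxY P μ X hmeas hiid hlaw htrans Y hYmeas hYindep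
            (Real.exp t) (Real.exp_pos t)) ?_
          rw [← ENNReal.ofReal_inv_of_pos (Real.exp_pos t), ← Real.exp_neg]
  -- entropy integral
  have hDmeas : Measurable D :=
    (show Measurable fun x : Γ => - Real.log (μ {x⁻¹}).toReal from fun s _ => salm_measSet _).comp
      hYmeas
  have hENT : ∫⁻ ω, ENNReal.ofReal (D ω) ∂P ≠ ∞ := by
    have hterm : ∀ z : Γ, ENNReal.ofReal (- Real.log (μ {z}).toReal) * μ {z}
        = ENNReal.ofReal (Real.negMulLog (μ {z}).toReal) := by
      intro z
      have hz1 : (μ {z}).toReal ≤ 1 := htole μ ‹_› _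
      have hnl : 0 ≤ - Real.log (μ {z}).toReal := by
        simp only [neg_nonneg]
        exact Real.log_nonpos ENNReal.toReal_nonneg hz1
      set t := (μ {z}).toReal with ht
      rw [show μ {z} = ENNReal.ofReal t from by
        rw [ht]; exact (ENNReal.ofReal_toReal (measure_ne_top μ _)).symm]
      rw [← ENNReal.ofReal_mul hnl]
      congr 1
      rw [Real.negMulLog]
      ring
    have hnn : ∀ z : Γ, 0 ≤ Real.negMulLog (μ {z}).toReal := fun z =>
      Real.negMulLog_nonneg ENNReal.toReal_nonneg (htole μ ‹_› _)
    calc ∫⁻ ω, ENNReal.ofReal (D ω) ∂P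
        = ∫⁻ x, ENNReal.ofReal (- Real.log (μ {x⁻¹}).toReal) ∂(Measure.map Y P) := by
          rw [lintegral_map (fun s _ => salm_measSet _) hYmeas]
      _ = ∫⁻ x, ENNReal.ofReal (- Real.log (μ {x⁻¹}).toReal)
            ∂(Measure.map (fun g : Γ => g⁻¹) μ) := by rw [hYlaw]
      _ = ∑' x : Γ, ENNReal.ofReal (- Real.log (μ {x⁻¹}).toReal)
            * (Measure.map (fun g : Γ => g⁻¹) μ) {x} := lintegral_countable' _
      _ = ∑' x : Γ, ENNReal.ofReal (- Real.log (μ {x⁻¹}).toReal) * μ {x⁻¹} := by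
          refine tsum_congr fun x => ?_
          congr 1
          rw [Measure.map_apply hInvMeas (measurableSet_singleton x)]
          congr 1
          ext g
          simp [inv_eq_iff_eq_inv]
      _ = ∑' z : Γ, ENNReal.ofReal (- Real.log (μ {z}).toReal) * μ {z} := by
          rw [← Equiv.tsum_eq (Equiv.inv Γ)
            (fun z => ENNReal.ofReal (- Real.log (μ {z}).toReal) * μ {z})]
          rfl
      _ = ∑' z : Γ, ENNReal.ofReal (Real.negMulLog (μ {z}).toReal) :=
          tsum_congr hterm
      _ = ENNReal.ofReal (∑' z : Γ, Real.negMulLog (μ {z}).toReal) :=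
          (ENNReal.ofReal_tsum_of_nonneg hnn hent).symm
      _ ≠ ∞ := ENNReal.ofReal_ne_top
  have hexp : ∫⁻ t in Set.Ioi (0:ℝ), ENNReal.ofReal (Real.exp (-t)) ≠ ∞ := by
    have hint : IntegrableOn (fun t : ℝ => Real.exp (-t)) (Set.Ioi 0) := by
      have h1 := exp_neg_integrableOn_Ioi 0 (b := 1) zero_lt_one
      simpa using h1
    have hfi := hint.2
    rw [hasFiniteIntegral_iff_ofReal (ae_of_all _ fun t => (Real.exp_pos _).le)] at hfi
    exact hfi.ne
  have hftot : ∫⁻ ω, ENNReal.ofReal (f ω) ∂P ≠ ∞ := by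
    rw [lintegral_eq_lintegral_meas_lt P (ae_of_all _ hfnn) hfaemeas]
    have hmono2 : ∫⁻ t in Set.Ioi (0:ℝ), P {a | t < f a}
        ≤ ∫⁻ t in Set.Ioi (0:ℝ), (P {ω | t < D ω} + ENNReal.ofReal (Real.exp (-t))) := by
      refine lintegral_mono_ae ?_
      rw [ae_restrict_iff' measurableSet_Ioi]
      exact ae_of_all _ fun t ht => htail t ht
    refine ne_top_of_le_ne_top ?_ hmono2
    have hant : Measurable fun t : ℝ => P {ω | t < D ω} := by
      have h1 : Antitone fun t : ℝ => P {ω | t < D ω} :=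
        fun t s hts => measure_mono fun ω hω => lt_of_le_of_lt hts hω
      exact h1.measurable
    rw [lintegral_add_left hant]
    refine ENNReal.add_ne_top.2 ⟨?_, hexp⟩
    rw [← lintegral_eq_lintegral_meas_lt P (ae_of_all _ hDnn) hDmeas.aemeasurable]
    exact hENT
  constructor
  · exact hGOOD.mono fun ω hω => hω.2
  · refine ⟨hfaemeas.aestronglyMeasurable, ?_⟩
    rw [hasFiniteIntegral_iff_ofReal (ae_of_all _ hfnn)]
    exact lt_top_iff_ne_top.2 hftot
end
end
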